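/- arXiv:2603.10766 — 4 statements merged into one kernel-verified Lean document; each statement's English description precedes it below -/
import Mathlib

section
/- Let r ≥ 2 and n₁, n₂ ∈ ℕ, and let α₁ and α₂ be the residues of n₁ and n₂ modulo r−1 (so 0 ≤ α_i ≤ r−2). Then f(n₁ + n₂, r) − f(n₁, r) − f(n₂, r) − 2·((r−2)/(r−1))·n₁·n₂ equals 2·α₁·α₂/(r−1) if α₁ + α₂ < r−1, and equals 2·(r−1−α₁)·(r−1−α₂)/(r−1) if α₁ + α₂ ≥ r−1. -/
/-! Common definitions: digraphs, palettes, 3-graphs, uniform Turán density. -/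

/-- A digraph on a vertex type `V`: an irreflexive arc relation. -/
structure Digr (V : Type) where
  Adj : V → V → Prop
  irrefl : ∀ v, ¬ Adj v v

/-- `G.Contains D` : the digraph `G` has a subdigraph isomorphic to `D`,
i.e. there is an arc-preserving injection of `D` into `G`. -/
def Digr.Contains {V W : Type} (G : Digr V) (D : Digr W) : Prop :=
  ∃ f : W → V, Function.Injective f ∧ ∀ a b, D.Adj a b → G.Adj (f a) (f b)

/-- The number of arcs of a digraph on a finite vertex type. -/
noncomputable def Digr.arcCount {V : Type} [Fintype V] (D : Digr V) : ℕ :=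
  {p : V × V | D.Adj p.1 p.2}.ncard

/-- The sum `D ⊕ D'` of two digraphs: disjoint union together with all arcs in
both directions between the two parts. -/
def Digr.sum {V W : Type} (D : Digr V) (D' : Digr W) : Digr (V ⊕ W) where
  Adj x y :=
    match x, y with
    | Sum.inl a, Sum.inl b => D.Adj a b
    | Sum.inr a, Sum.inr b => D'.Adj a b
    | Sum.inl _, Sum.inr _ => True
    | Sum.inr _, Sum.inl _ => True
  irrefl := by
    rintro (a | a) h
    · exact D.irrefl a h
    · exact D'.irrefl a h

/-- A tournament: every pair of distinct vertices is joined by exactly one arc. -/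
def IsTournament {V : Type} (D : Digr V) : Prop :=
  ∀ u v : V, u ≠ v → (D.Adj u v ↔ ¬ D.Adj v u)

/-- The transitive tournament on `r` vertices. -/
def transTournament (r : ℕ) : Digr (Fin r) :=
  ⟨fun i j => i < j, fun v h => lt_irrefl v h⟩

/-- The directed triangle. -/
def cycle3 : Digr (Fin 3) := ⟨fun i j => j = i + 1, by decide⟩

/-- The one-vertex digraph (trivial tournament `T₁`). -/
def oneVertexDigr : Digr Unit := ⟨fun _ _ => False, fun _ h => h⟩

/-- The sum of a family of `s` digraphs, each on two vertices: disjoint union with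
all arcs in both directions between distinct members of the family. -/
def sumFamily (s : ℕ) (T : Fin s → Digr (Fin 2)) : Digr (Fin s × Fin 2) where
  Adj x y := x.1 ≠ y.1 ∨ (x.1 = y.1 ∧ (T x.1).Adj x.2 y.2)
  irrefl := by
    rintro ⟨i, a⟩ (h | ⟨-, h⟩)
    · exact h rfl
    · exact (T i).irrefl a h

/-- The Turán number `ex(n, K_r)` : the maximum number of edges of a `K_r`-free
simple graph on `n` vertices. -/
noncomputable def exK (n r : ℕ) : ℕ :=
  sSup {m | ∃ G : SimpleGraph (Fin n), G.CliqueFree r ∧ G.edgeSet.ncard = m}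

/-- The digraph Turán number `ex(n, D)` : the maximum number of arcs of a `D`-free
digraph on `n` vertices. -/
noncomputable def exDigr {W : Type} (n : ℕ) (D : Digr W) : ℕ :=
  sSup {m | ∃ G : Digr (Fin n), ¬ G.Contains D ∧ G.arcCount = m}

/-- An `r`-vertex digraph `D` is `r`-good if `ex(n, D) = 2 ex(n, K_r)` for all `n`
(membership in the family `𝓕_r`). -/
def IsGood {V : Type} [Fintype V] (r : ℕ) (D : Digr V) : Prop :=
  Fintype.card V = r ∧ ∀ n : ℕ, exDigr n D = 2 * exK n r

/-- Membership in `𝓕_r^*` : `r`-good and the underlying graph is `K_r`. -/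
def IsGoodStar {V : Type} [Fintype V] (r : ℕ) (D : Digr V) : Prop :=
  IsGood r D ∧ ∀ u v : V, u ≠ v → D.Adj u v ∨ D.Adj v u

/-- `f(n, r) = 2 |E(T_{n,r})|`, twice the number of edges of the Turán graph, the
complete `(r-1)`-partite graph on `n` vertices with balanced parts. -/
noncomputable def fTuran (n r : ℕ) : ℕ :=
  2 * (SimpleGraph.turanGraph n (r - 1)).edgeSet.ncard

/-- The bidirected Turán graph `↔T_{n,r}`. -/
def bidirTuran (n r : ℕ) : Digr (Fin n) :=
  ⟨fun i j => (SimpleGraph.turanGraph n (r - 1)).Adj i j,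
   fun _ h => (SimpleGraph.turanGraph n (r - 1)).irrefl h⟩

/-- A palette: a set of admissible triples over a color type `C`. -/
structure Palette (C : Type) where
  A : Set (C × C × C)

/-- The density `d(P) = |A| / |C|³` of a palette. -/
noncomputable def Palette.density {C : Type} [Fintype C] (P : Palette C) : ℝ :=
  (P.A.ncard : ℝ) / (Fintype.card C : ℝ) ^ 3

/-- The union `P₁ ⊍ P₂` of two palettes (on the disjoint union of color sets). -/
def Palette.union {C₁ C₂ : Type} (P₁ : Palette C₁) (P₂ : Palette C₂) :
    Palette (C₁ ⊕ C₂) :=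
  ⟨{t | (∃ x y z, (x, y, z) ∈ P₁.A ∧ t = (Sum.inl x, Sum.inl y, Sum.inl z)) ∨
        (∃ x y z, (x, y, z) ∈ P₂.A ∧ t = (Sum.inr x, Sum.inr y, Sum.inr z))}⟩

/-- The reverse `rev(P)` of a palette. -/
def Palette.rev {C : Type} (P : Palette C) : Palette C :=
  ⟨{t | (t.2.2, t.2.1, t.1) ∈ P.A}⟩

/-- `Subpalette P Q` : `P ⊆ Q`, i.e. there is a map of colors carrying admissible
triples of `P` to admissible triples of `Q`. -/
def Subpalette {C₁ C₂ : Type} (P : Palette C₁) (Q : Palette C₂) : Prop :=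
  ∃ f : C₁ → C₂, ∀ t ∈ P.A, (f t.1, f t.2.1, f t.2.2) ∈ Q.A

/-- The left palette `Q^L_D` of a digraph `D`: colors `C₁ ⊔ C₁ × C₁`, admissible
triples `(a, b, c_{ab})` for arcs `(a, b)` of `D`. -/
def leftPalette {C : Type} (D : Digr C) : Palette (C ⊕ C × C) :=
  ⟨{t | ∃ a b, D.Adj a b ∧ t = (Sum.inl a, Sum.inl b, Sum.inr (a, b))}⟩

/-- The right palette `Q^R_D` of a digraph `D`: colors `C₃ ⊔ C₃ × C₃`, admissible
triples `(c_{ab}, a, b)` for arcs `(a, b)` of `D`. -/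
def rightPalette {C : Type} (D : Digr C) : Palette (C ⊕ C × C) :=
  ⟨{t | ∃ a b, D.Adj a b ∧ t = (Sum.inr (a, b), Sum.inl a, Sum.inl b)}⟩

/-- The palette `Q_r = ([r], {(x,y,z) : x ≠ y})` (colors indexed `0, …, r-1`). -/
def QPalette (r : ℕ) : Palette (Fin r) := ⟨{t | t.1 ≠ t.2.1}⟩

/-- The palette `Q²_r = ([r], {(x,y,z) : x ≠ y ∧ y ≠ z})`. -/
def Q2Palette (r : ℕ) : Palette (Fin r) := ⟨{t | t.1 ≠ t.2.1 ∧ t.2.1 ≠ t.2.2}⟩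

/-- The palette `Q⁺¹₅ = ([5], {(1,2,3), (4,5,1)})`, with colors relabelled `0,…,4`. -/
def Qplus1 : Palette (Fin 5) := ⟨{(0, 1, 2), (3, 4, 0)}⟩

/-- The palette `Q⁺²₅ = ([5], {(1,2,3), (4,1,5)})`, with colors relabelled `0,…,4`. -/
def Qplus2 : Palette (Fin 5) := ⟨{(0, 1, 2), (3, 0, 4)}⟩

/-- The palette `Q⁻₃ = ([3], {(1,2,3)})`, with colors relabelled `0,1,2`. -/
def Qminus3 : Palette (Fin 3) := ⟨{(0, 1, 2)}⟩

/-- The palette `Q'⁻₃ = ([3], {(1,3,1),(1,3,2),(2,3,1),(2,3,2)})`, relabelled `0,1,2`. -/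
def Qpminus3 : Palette (Fin 3) := ⟨{(0, 2, 0), (0, 2, 1), (1, 2, 0), (1, 2, 1)}⟩

/-- A 3-uniform hypergraph on a vertex type `V`. -/
structure ThreeGraph (V : Type) where
  edges : Set (Set V)
  card_eq : ∀ e ∈ edges, e.ncard = 3

/-- The complete 3-graph on a vertex type. -/
def completeThreeGraph (V : Type) : ThreeGraph V := ⟨{e | e.ncard = 3}, fun _ he => he⟩

/-- `F` is `P`-colorable: there are a linear order on `V(F)` and a coloring of the
pairs such that every edge, listed in increasing order, gives an admissible triple. -/
def PaletteColorable {V C : Type} (F : ThreeGraph V) (P : Palette C) : Prop :=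
  ∃ (L : LinearOrder V) (φ : V → V → C),
    ∀ u v w : V, L.lt u v → L.lt v w → ({u, v, w} : Set V) ∈ F.edges →
      (φ u v, φ u w, φ v w) ∈ P.A

/-- `H` is `F`-free: no injection of `V(F)` into `V(H)` maps edges to edges. -/
def FreeOf {V W : Type} (F : ThreeGraph V) (H : ThreeGraph W) : Prop :=
  ¬ ∃ f : V → W, Function.Injective f ∧ ∀ e ∈ F.edges, f '' e ∈ H.edges

/-- `H` is uniformly `(d, μ)`-dense: every vertex subset `U` spans at least
`d · C(|U|,3) − μ · |V(H)|³` edges. -/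
def UniformlyDense {V : Type} [Fintype V] (H : ThreeGraph V) (d μ : ℝ) : Prop :=
  ∀ U : Set V,
    d * (Nat.choose U.ncard 3 : ℝ) - μ * (Fintype.card V : ℝ) ^ 3 ≤
      ({e | e ∈ H.edges ∧ e ⊆ U} : Set (Set V)).ncard

/-- The uniform Turán density `π_u(F)`. -/
noncomputable def uniformTuranDensity {V : Type} (F : ThreeGraph V) : ℝ :=
  sSup {d : ℝ | 0 ≤ d ∧ d ≤ 1 ∧ ∀ μ : ℝ, 0 < μ → ∀ n₀ : ℕ,
    ∃ (n : ℕ) (H : ThreeGraph (Fin n)), n₀ ≤ n ∧ FreeOf F H ∧ UniformlyDense H d μ}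

section AuxStmt10
open Finset

-- count of j < n with j % q = n % q is n / q
lemma count_res (n q : ℕ) (hq : 0 < q) :
    #((range n).filter fun j => j % q = n % q) = n / q := by
  rw [← Finset.card_range (n / q)]
  apply Finset.card_bij' (fun j _ => j / q) (fun k _ => n % q + q * k)
  · intro j hj
    simp only [mem_filter, mem_range] at hj
    obtain ⟨hjn, hjm⟩ := hj
    rw [mem_range]
    have h1 : q * (j / q) + j % q = j := Nat.div_add_mod j q
    have h2 : q * (n / q) + n % q = n := Nat.div_add_mod n q
    have : q * (j / q) < q * (n / q) := by omega
    exact Nat.lt_of_mul_lt_mul_left this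
  · intro k hk
    rw [mem_range] at hk
    simp only [mem_filter, mem_range]
    constructor
    · have h2 : q * (n / q) + n % q = n := Nat.div_add_mod n q
      have h3 : q * (k + 1) ≤ q * (n / q) := Nat.mul_le_mul_left q hk
      have h4 : q * (k + 1) = q * k + q := by ring
      omega
    · rw [Nat.add_mul_mod_self_left, Nat.mod_mod_of_dvd]
      exact dvd_refl q
  · intro j hj
    simp only [mem_filter, mem_range] at hj
    rw [← hj.2, Nat.mod_add_div]
  · intro k hk
    rw [Nat.add_mul_div_left _ _ hq, Nat.div_eq_of_lt (Nat.mod_lt n hq), Nat.zero_add]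

lemma count_neq (n q : ℕ) (hq : 0 < q) :
    #((range n).filter fun j => ¬ (j % q = n % q)) = n - n / q := by
  have h := Finset.card_filter_add_card_filter_not (s := range n)
      (p := fun j => j % q = n % q)
  rw [count_res n q hq, Finset.card_range] at h
  have h2 : #(Finset.filter (fun a => ¬(fun j => j % q = n % q) a) (range n))
      = #(Finset.filter (fun j => ¬ j % q = n % q) (range n)) := rfl
  omega

lemma key_sum (q : ℕ) (hq : 0 < q) (n : ℕ) :
    #((range n ×ˢ range n).filter fun p => ¬ (p.1 % q = p.2 % q))
      + (q * (n / q) ^ 2 + 2 * (n % q) * (n / q) + n % q) = n ^ 2 := by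
  induction n with
  | zero => simp
  | succ n ih =>
    have hsplit : ((range (n+1) ×ˢ range (n+1)).filter fun p => ¬ (p.1 % q = p.2 % q)).card
        = ((range n ×ˢ range n).filter fun p => ¬ (p.1 % q = p.2 % q)).card
          + 2 * (n - n / q) := by
      rw [Finset.card_filter, Finset.card_filter, Finset.sum_product, Finset.sum_product,
        Finset.range_add_one, Finset.sum_insert (by simp)]
      have inner : ∀ i : ℕ, ∑ j ∈ insert n (range n), (if ¬ (i % q = j % q) then 1 else 0)
          = (∑ j ∈ range n, (if ¬ (i % q = j % q) then 1 else 0))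
            + (if ¬ (i % q = n % q) then 1 else 0) := by
        intro i
        rw [Finset.sum_insert (by simp), add_comm]
      simp only [inner]
      have h1 : (∑ j ∈ range n, (if ¬ (n % q = j % q) then 1 else 0)) = n - n / q := by
        rw [← count_neq n q hq, Finset.card_filter]
        apply Finset.sum_congr rfl
        intro j _; simp [eq_comm]
      have h2 : (∑ i ∈ range n, (if ¬ (i % q = n % q) then 1 else 0)) = n - n / q := by
        rw [← count_neq n q hq, Finset.card_filter]
      rw [h1, Finset.sum_add_distrib, h2]
      simp
      omega
    rw [hsplit]
    -- arithmetic on div/mod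
    have hdm : q * (n / q) + n % q = n := Nat.div_add_mod n q
    have hlt : n % q < q := Nat.mod_lt n hq
    have hle : n / q ≤ n := Nat.div_le_self n q
    by_cases hc : n % q + 1 < q
    · obtain ⟨hdiv, hmod⟩ : (n + 1) / q = n / q ∧ (n + 1) % q = n % q + 1 :=
        (Nat.div_mod_unique hq).mpr (by constructor <;> omega)
      rw [hmod, hdiv]
      have e1 : (n+1)^2 = n^2 + 2*n + 1 := by ring
      have e2 : 2 * (n % q + 1) * (n / q) = 2 * (n % q) * (n / q) + 2 * (n / q) := by ring
      omega
    · have hq1 : n % q + 1 = q := by omega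
      have e0 : q * (n / q + 1) = q * (n / q) + q := by ring
      obtain ⟨hdiv, hmod⟩ : (n + 1) / q = n / q + 1 ∧ (n + 1) % q = 0 :=
        (Nat.div_mod_unique hq).mpr (by constructor <;> omega)
      rw [hmod, hdiv]
      have e1 : (n+1)^2 = n^2 + 2*n + 1 := by ring
      have e2 : q * (n/q + 1)^2 = q * (n/q)^2 + 2*(q*(n/q)) + q := by ring
      have e5' : (n % q + 1) * (n/q) = q * (n/q) := by rw [hq1]
      have e5 : 2*(n % q)*(n/q) + 2*(n/q) = 2*(q*(n/q)) := by rw [← e5']; ring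
      omega

lemma turan_adj_iff (n q : ℕ) (v w : Fin n) :
    (SimpleGraph.turanGraph n q).Adj v w ↔ ¬ ((v:ℕ) % q = (w:ℕ) % q) := by
  constructor
  · intro h; simp [SimpleGraph.turanGraph] at h; exact_mod_cast h
  · intro h; simp [SimpleGraph.turanGraph]; exact_mod_cast h

lemma two_mul_card_turan (n q : ℕ) :
    2 * (SimpleGraph.turanGraph n q).edgeSet.ncard
      = #((range n ×ˢ range n).filter fun p => ¬ (p.1 % q = p.2 % q)) := by
  rw [Set.ncard_eq_toFinset_card']
  rw [show (SimpleGraph.turanGraph n q).edgeSet.toFinset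
        = (SimpleGraph.turanGraph n q).edgeFinset from rfl]
  rw [SimpleGraph.two_mul_card_edgeFinset]
  apply Finset.card_nbij (fun p => ((p.1 : ℕ), (p.2 : ℕ)))
  · rintro ⟨v, w⟩ hp
    simp only [mem_coe, mem_filter, mem_univ, true_and] at hp
    simp only [mem_coe, mem_filter, mem_product, mem_range]
    exact ⟨⟨v.isLt, w.isLt⟩, (turan_adj_iff n q v w).mp hp⟩
  · rintro ⟨v, w⟩ - ⟨v', w'⟩ - h
    simp only [Prod.mk.injEq] at h
    exact Prod.ext (Fin.ext h.1) (Fin.ext h.2)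
  · rintro ⟨a, b⟩ hp
    simp only [coe_filter, Set.mem_setOf_eq, mem_product, mem_range] at hp
    obtain ⟨⟨ha, hb⟩, hne⟩ := hp
    refine ⟨(⟨a, ha⟩, ⟨b, hb⟩), ?_, rfl⟩
    simp only [coe_filter, Set.mem_setOf_eq, mem_univ, true_and]
    exact (turan_adj_iff n q _ _).mpr hne


lemma fTuran_real (r : ℕ) (hr : 2 ≤ r) (n : ℕ) :
    (fTuran n r : ℝ) = (n:ℝ)^2 - (r-1 : ℕ)*((n/(r-1):ℕ):ℝ)^2
      - 2*((n%(r-1):ℕ):ℝ)*((n/(r-1):ℕ):ℝ) - ((n%(r-1):ℕ):ℝ) := by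
  have hq : 0 < r - 1 := by omega
  have hnat : fTuran n r + ((r-1) * (n/(r-1))^2 + 2*(n%(r-1))*(n/(r-1)) + n%(r-1)) = n^2 := by
    show 2 * (SimpleGraph.turanGraph n (r - 1)).edgeSet.ncard + _ = _
    rw [two_mul_card_turan n (r-1)]
    exact key_sum (r-1) hq n
  have := congrArg (Nat.cast : ℕ → ℝ) hnat
  push_cast at this
  linarith


end AuxStmt10

/-- the value of `f(n₁+n₂, r) − f(n₁, r) − f(n₂, r) − 2((r−2)/(r−1))n₁n₂`
in terms of the residues `α₁, α₂` of `n₁, n₂` modulo `r − 1`. -/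
theorem stmt10 (r n₁ n₂ : ℕ) (hr : 2 ≤ r) (α₁ α₂ : ℕ)
    (hα₁ : α₁ = n₁ % (r - 1)) (hα₂ : α₂ = n₂ % (r - 1)) :
    (fTuran (n₁ + n₂) r : ℝ) - (fTuran n₁ r : ℝ) - (fTuran n₂ r : ℝ)
        - 2 * (((r : ℝ) - 2) / ((r : ℝ) - 1)) * (n₁ : ℝ) * (n₂ : ℝ) =
      if α₁ + α₂ < r - 1 then
        2 * ((α₁ : ℝ) * (α₂ : ℝ)) / ((r : ℝ) - 1)
      else
        2 * ((((r : ℝ) - 1) - (α₁ : ℝ)) * (((r : ℝ) - 1) - (α₂ : ℝ))) / ((r : ℝ) - 1) := by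
  have hq : 0 < r - 1 := by omega
  set q := r - 1 with hqdef
  have hrq : (r : ℝ) = (q : ℝ) + 1 := by
    have : r = q + 1 := by omega
    rw [this]; push_cast; ring
  have hQ0 : (q : ℝ) ≠ 0 := by positivity
  have h₁ : q * (n₁ / q) + α₁ = n₁ := by rw [hα₁]; exact Nat.div_add_mod n₁ q
  have h₂ : q * (n₂ / q) + α₂ = n₂ := by rw [hα₂]; exact Nat.div_add_mod n₂ q
  have hα₁lt : α₁ < q := hα₁ ▸ Nat.mod_lt _ hq
  have hα₂lt : α₂ < q := hα₂ ▸ Nat.mod_lt _ hq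
  have hn₁ : (n₁ : ℝ) = (q : ℝ) * ((n₁/q : ℕ) : ℝ) + (α₁ : ℝ) := by exact_mod_cast (congrArg (Nat.cast : ℕ → ℝ) h₁).symm
  have hn₂ : (n₂ : ℝ) = (q : ℝ) * ((n₂/q : ℕ) : ℝ) + (α₂ : ℝ) := by exact_mod_cast (congrArg (Nat.cast : ℕ → ℝ) h₂).symm
  have hmul : ∀ a b : ℕ, q * (a + b) = q * a + q * b := fun a b => by ring
  by_cases hc : α₁ + α₂ < q
  · obtain ⟨hdiv, hmod⟩ : (n₁+n₂)/q = n₁/q + n₂/q ∧ (n₁+n₂)%q = α₁+α₂ :=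
      (Nat.div_mod_unique hq).mpr ⟨by have := hmul (n₁/q) (n₂/q); omega, hc⟩
    rw [if_pos hc, fTuran_real r hr (n₁+n₂), fTuran_real r hr n₁, fTuran_real r hr n₂,
      hdiv, hmod, ← hα₁, ← hα₂]
    push_cast
    rw [hn₁, hn₂, hrq]
    field_simp
    rw [← hqdef, add_sub_cancel_right]; field_simp
    ring
  · have hle : q ≤ α₁ + α₂ := by omega
    obtain ⟨hdiv, hmod⟩ : (n₁+n₂)/q = n₁/q + n₂/q + 1 ∧ (n₁+n₂)%q = α₁+α₂-q :=
      (Nat.div_mod_unique hq).mpr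
        ⟨by have := hmul (n₁/q) (n₂/q); have : q * (n₁/q + n₂/q + 1) = q * (n₁/q) + q * (n₂/q) + q := by ring
            omega,
         by omega⟩
    rw [if_neg hc, fTuran_real r hr (n₁+n₂), fTuran_real r hr n₁, fTuran_real r hr n₂,
      hdiv, hmod, ← hα₁, ← hα₂]
    push_cast [Nat.cast_sub hle]
    rw [hn₁, hn₂, hrq]
    field_simp
    rw [← hqdef, add_sub_cancel_right]; field_simp
    ring
end

section
/- Every tournament on six vertices can be partitioned into two vertex-disjoint transitive tournaments on three vertices; that is, for every tournament D on six vertices there is a partition V(D) = S ∪ S' with |S| = |S'| = 3 such that the subdigraphs induced on S and on S' are both transitive tournaments. -/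
private def trip (n K1 K2 K3 : Nat) : Bool :=
  let t1 := n / K1 % 2 == 1
  let t2 := n / K2 % 2 == 1
  let t3 := n / K3 % 2 == 1
  !(t1 && t2 && !t3) && !(!t1 && !t2 && t3)

private def check6 (n : Nat) : Bool :=
  (trip n 1 4 2 && trip n 512 16384 8192) ||
  (trip n 1 16 8 && trip n 256 16384 4096) ||
  (trip n 1 128 64 && trip n 32 8192 4096) ||
  (trip n 1 2048 1024 && trip n 32 512 256) ||
  (trip n 2 32 8 && trip n 128 16384 2048) ||
  (trip n 2 256 64 && trip n 16 8192 2048) ||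
  (trip n 2 4096 1024 && trip n 16 512 128) ||
  (trip n 8 512 64 && trip n 4 4096 2048) ||
  (trip n 8 8192 1024 && trip n 4 256 128) ||
  (trip n 64 16384 1024 && trip n 4 32 16)

set_option maxRecDepth 10000 in
set_option maxHeartbeats 2000000 in
private lemma key6 : ∀ a < 256, ∀ b < 128, check6 (128 * a + b) = true := by decide

private lemma bitext (K lo d hi n : ℕ) (hK : 0 < K) (hlo : lo < K) (hd : d ≤ 1)
    (hn : n = lo + K * d + 2 * K * hi) : n / K % 2 = d := by
  subst hn
  rw [show lo + K * d + 2 * K * hi = lo + K * (d + 2 * hi) by ring,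
    Nat.add_mul_div_left _ _ hK, Nat.div_eq_of_lt hlo]
  omega

private lemma trip_prop {n K1 K2 K3 : ℕ} {P1 P2 P3 : Prop} [Decidable P1] [Decidable P2]
    [Decidable P3] (h1 : n / K1 % 2 = (decide P1).toNat) (h2 : n / K2 % 2 = (decide P2).toNat)
    (h3 : n / K3 % 2 = (decide P3).toNat) (ht : trip n K1 K2 K3 = true) :
    ¬(P1 ∧ P2 ∧ ¬P3) ∧ ¬(¬P1 ∧ ¬P2 ∧ P3) := by
  unfold trip at ht
  rw [h1, h2, h3] at ht
  by_cases p1 : P1 <;> by_cases p2 : P2 <;> by_cases p3 : P3 <;> simp_all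

set_option maxHeartbeats 1600000 in
private lemma transOfTrip {V : Type} [DecidableEq V] (D : Digr V) (hD : IsTournament D)
    (X Y Z : V) (hXY : X ≠ Y) (hYZ : Y ≠ Z) (hXZ : X ≠ Z)
    (h1 : ¬(D.Adj X Y ∧ D.Adj Y Z ∧ ¬ D.Adj X Z))
    (h2 : ¬(¬ D.Adj X Y ∧ ¬ D.Adj Y Z ∧ D.Adj X Z)) :
    ∀ a ∈ ({X, Y, Z} : Finset V), ∀ b ∈ ({X, Y, Z} : Finset V), ∀ c ∈ ({X, Y, Z} : Finset V),
      D.Adj a b → D.Adj b c → D.Adj a c := by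
  have tXY := hD X Y hXY
  have tYZ := hD Y Z hYZ
  have tXZ := hD X Z hXZ
  have iX := D.irrefl X
  have iY := D.irrefl Y
  have iZ := D.irrefl Z
  intro a ha b hb c hc
  simp only [Finset.mem_insert, Finset.mem_singleton] at ha hb hc
  rcases ha with rfl | rfl | rfl <;> rcases hb with rfl | rfl | rfl <;>
    rcases hc with rfl | rfl | rfl <;> tauto

private lemma assemble {V : Type} [Fintype V] [DecidableEq V] (e : V ≃ Fin 6)
    (x y z u v w : Fin 6)
    (hall : ({x, y, z} : Finset (Fin 6)) ∪ {u, v, w} = Finset.univ)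
    (hdis : Disjoint ({x, y, z} : Finset (Fin 6)) ({u, v, w} : Finset (Fin 6)))
    (hc1 : ({x, y, z} : Finset (Fin 6)).card = 3)
    (hc2 : ({u, v, w} : Finset (Fin 6)).card = 3)
    (D : Digr V)
    (h1 : ∀ a ∈ ({e.symm x, e.symm y, e.symm z} : Finset V),
      ∀ b ∈ ({e.symm x, e.symm y, e.symm z} : Finset V),
      ∀ c ∈ ({e.symm x, e.symm y, e.symm z} : Finset V), D.Adj a b → D.Adj b c → D.Adj a c)
    (h2 : ∀ a ∈ ({e.symm u, e.symm v, e.symm w} : Finset V),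
      ∀ b ∈ ({e.symm u, e.symm v, e.symm w} : Finset V),
      ∀ c ∈ ({e.symm u, e.symm v, e.symm w} : Finset V), D.Adj a b → D.Adj b c → D.Adj a c) :
    ∃ S S' : Finset V, S ∪ S' = Finset.univ ∧ Disjoint S S' ∧
      S.card = 3 ∧ S'.card = 3 ∧
      (∀ a ∈ S, ∀ b ∈ S, ∀ c ∈ S, D.Adj a b → D.Adj b c → D.Adj a c) ∧
      (∀ a ∈ S', ∀ b ∈ S', ∀ c ∈ S', D.Adj a b → D.Adj b c → D.Adj a c) := by
  have hi : Function.Injective (⇑e.symm) := e.symm.injective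
  have e1 : ({e.symm x, e.symm y, e.symm z} : Finset V) = Finset.image e.symm {x, y, z} := by
    simp [Finset.image_insert]
  have e2 : ({e.symm u, e.symm v, e.symm w} : Finset V) = Finset.image e.symm {u, v, w} := by
    simp [Finset.image_insert]
  refine ⟨{e.symm x, e.symm y, e.symm z}, {e.symm u, e.symm v, e.symm w}, ?_, ?_, ?_, ?_, h1, h2⟩
  · rw [e1, e2, ← Finset.image_union, hall, Finset.image_univ_equiv]
  · rw [e1, e2, Finset.disjoint_image hi]
    exact hdis
  · rw [e1, Finset.card_image_of_injective _ hi, hc1]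
  · rw [e2, Finset.card_image_of_injective _ hi, hc2]

set_option maxHeartbeats 3200000 in
/-- every tournament on six vertices can be partitioned into two
vertex-disjoint transitive tournaments on three vertices. -/
theorem stmt12 (V : Type) [Fintype V] [DecidableEq V] (hV : Fintype.card V = 6) (D : Digr V)
    (hD : IsTournament D) :
    ∃ S S' : Finset V, S ∪ S' = Finset.univ ∧ Disjoint S S' ∧
      S.card = 3 ∧ S'.card = 3 ∧
      (∀ a ∈ S, ∀ b ∈ S, ∀ c ∈ S, D.Adj a b → D.Adj b c → D.Adj a c) ∧
      (∀ a ∈ S', ∀ b ∈ S', ∀ c ∈ S', D.Adj a b → D.Adj b c → D.Adj a c) := by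
  classical
  obtain ⟨e⟩ : Nonempty (V ≃ Fin 6) := ⟨Fintype.equivFinOfCardEq hV⟩
  set n : ℕ := 1 * (decide (D.Adj (e.symm 0) (e.symm 1))).toNat + 2 * (decide (D.Adj (e.symm 0) (e.symm 2))).toNat + 4 * (decide (D.Adj (e.symm 1) (e.symm 2))).toNat + 8 * (decide (D.Adj (e.symm 0) (e.symm 3))).toNat + 16 * (decide (D.Adj (e.symm 1) (e.symm 3))).toNat + 32 * (decide (D.Adj (e.symm 2) (e.symm 3))).toNat + 64 * (decide (D.Adj (e.symm 0) (e.symm 4))).toNat + 128 * (decide (D.Adj (e.symm 1) (e.symm 4))).toNat + 256 * (decide (D.Adj (e.symm 2) (e.symm 4))).toNat + 512 * (decide (D.Adj (e.symm 3) (e.symm 4))).toNat + 1024 * (decide (D.Adj (e.symm 0) (e.symm 5))).toNat + 2048 * (decide (D.Adj (e.symm 1) (e.symm 5))).toNat + 4096 * (decide (D.Adj (e.symm 2) (e.symm 5))).toNat + 8192 * (decide (D.Adj (e.symm 3) (e.symm 5))).toNat + 16384 * (decide (D.Adj (e.symm 4) (e.symm 5))).toNat with hn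
  have hle0 : (decide (D.Adj (e.symm 0) (e.symm 1))).toNat ≤ 1 := Bool.toNat_le _
  have hle1 : (decide (D.Adj (e.symm 0) (e.symm 2))).toNat ≤ 1 := Bool.toNat_le _
  have hle2 : (decide (D.Adj (e.symm 1) (e.symm 2))).toNat ≤ 1 := Bool.toNat_le _
  have hle3 : (decide (D.Adj (e.symm 0) (e.symm 3))).toNat ≤ 1 := Bool.toNat_le _
  have hle4 : (decide (D.Adj (e.symm 1) (e.symm 3))).toNat ≤ 1 := Bool.toNat_le _
  have hle5 : (decide (D.Adj (e.symm 2) (e.symm 3))).toNat ≤ 1 := Bool.toNat_le _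
  have hle6 : (decide (D.Adj (e.symm 0) (e.symm 4))).toNat ≤ 1 := Bool.toNat_le _
  have hle7 : (decide (D.Adj (e.symm 1) (e.symm 4))).toNat ≤ 1 := Bool.toNat_le _
  have hle8 : (decide (D.Adj (e.symm 2) (e.symm 4))).toNat ≤ 1 := Bool.toNat_le _
  have hle9 : (decide (D.Adj (e.symm 3) (e.symm 4))).toNat ≤ 1 := Bool.toNat_le _
  have hle10 : (decide (D.Adj (e.symm 0) (e.symm 5))).toNat ≤ 1 := Bool.toNat_le _
  have hle11 : (decide (D.Adj (e.symm 1) (e.symm 5))).toNat ≤ 1 := Bool.toNat_le _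
  have hle12 : (decide (D.Adj (e.symm 2) (e.symm 5))).toNat ≤ 1 := Bool.toNat_le _
  have hle13 : (decide (D.Adj (e.symm 3) (e.symm 5))).toNat ≤ 1 := Bool.toNat_le _
  have hle14 : (decide (D.Adj (e.symm 4) (e.symm 5))).toNat ≤ 1 := Bool.toNat_le _
  have hsize : n < 32768 := by omega
  have hkey : check6 n = true := by
    have h := key6 (n / 128) (by omega) (n % 128) (by omega)
    rwa [Nat.div_add_mod n 128] at h
  have hlo0 : (0) < 1 := by omega
  have hlo1 : (1 * (decide (D.Adj (e.symm 0) (e.symm 1))).toNat) < 2 := by omega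
  have hlo2 : (1 * (decide (D.Adj (e.symm 0) (e.symm 1))).toNat + 2 * (decide (D.Adj (e.symm 0) (e.symm 2))).toNat) < 4 := by omega
  have hlo3 : (1 * (decide (D.Adj (e.symm 0) (e.symm 1))).toNat + 2 * (decide (D.Adj (e.symm 0) (e.symm 2))).toNat + 4 * (decide (D.Adj (e.symm 1) (e.symm 2))).toNat) < 8 := by omega
  have hlo4 : (1 * (decide (D.Adj (e.symm 0) (e.symm 1))).toNat + 2 * (decide (D.Adj (e.symm 0) (e.symm 2))).toNat + 4 * (decide (D.Adj (e.symm 1) (e.symm 2))).toNat + 8 * (decide (D.Adj (e.symm 0) (e.symm 3))).toNat) < 16 := by omega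
  have hlo5 : (1 * (decide (D.Adj (e.symm 0) (e.symm 1))).toNat + 2 * (decide (D.Adj (e.symm 0) (e.symm 2))).toNat + 4 * (decide (D.Adj (e.symm 1) (e.symm 2))).toNat + 8 * (decide (D.Adj (e.symm 0) (e.symm 3))).toNat + 16 * (decide (D.Adj (e.symm 1) (e.symm 3))).toNat) < 32 := by omega
  have hlo6 : (1 * (decide (D.Adj (e.symm 0) (e.symm 1))).toNat + 2 * (decide (D.Adj (e.symm 0) (e.symm 2))).toNat + 4 * (decide (D.Adj (e.symm 1) (e.symm 2))).toNat + 8 * (decide (D.Adj (e.symm 0) (e.symm 3))).toNat + 16 * (decide (D.Adj (e.symm 1) (e.symm 3))).toNat + 32 * (decide (D.Adj (e.symm 2) (e.symm 3))).toNat) < 64 := by omega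
  have hlo7 : (1 * (decide (D.Adj (e.symm 0) (e.symm 1))).toNat + 2 * (decide (D.Adj (e.symm 0) (e.symm 2))).toNat + 4 * (decide (D.Adj (e.symm 1) (e.symm 2))).toNat + 8 * (decide (D.Adj (e.symm 0) (e.symm 3))).toNat + 16 * (decide (D.Adj (e.symm 1) (e.symm 3))).toNat + 32 * (decide (D.Adj (e.symm 2) (e.symm 3))).toNat + 64 * (decide (D.Adj (e.symm 0) (e.symm 4))).toNat) < 128 := by omega
  have hlo8 : (1 * (decide (D.Adj (e.symm 0) (e.symm 1))).toNat + 2 * (decide (D.Adj (e.symm 0) (e.symm 2))).toNat + 4 * (decide (D.Adj (e.symm 1) (e.symm 2))).toNat + 8 * (decide (D.Adj (e.symm 0) (e.symm 3))).toNat + 16 * (decide (D.Adj (e.symm 1) (e.symm 3))).toNat + 32 * (decide (D.Adj (e.symm 2) (e.symm 3))).toNat + 64 * (decide (D.Adj (e.symm 0) (e.symm 4))).toNat + 128 * (decide (D.Adj (e.symm 1) (e.symm 4))).toNat) < 256 := by omega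
  have hlo9 : (1 * (decide (D.Adj (e.symm 0) (e.symm 1))).toNat + 2 * (decide (D.Adj (e.symm 0) (e.symm 2))).toNat + 4 * (decide (D.Adj (e.symm 1) (e.symm 2))).toNat + 8 * (decide (D.Adj (e.symm 0) (e.symm 3))).toNat + 16 * (decide (D.Adj (e.symm 1) (e.symm 3))).toNat + 32 * (decide (D.Adj (e.symm 2) (e.symm 3))).toNat + 64 * (decide (D.Adj (e.symm 0) (e.symm 4))).toNat + 128 * (decide (D.Adj (e.symm 1) (e.symm 4))).toNat + 256 * (decide (D.Adj (e.symm 2) (e.symm 4))).toNat) < 512 := by omega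
  have hlo10 : (1 * (decide (D.Adj (e.symm 0) (e.symm 1))).toNat + 2 * (decide (D.Adj (e.symm 0) (e.symm 2))).toNat + 4 * (decide (D.Adj (e.symm 1) (e.symm 2))).toNat + 8 * (decide (D.Adj (e.symm 0) (e.symm 3))).toNat + 16 * (decide (D.Adj (e.symm 1) (e.symm 3))).toNat + 32 * (decide (D.Adj (e.symm 2) (e.symm 3))).toNat + 64 * (decide (D.Adj (e.symm 0) (e.symm 4))).toNat + 128 * (decide (D.Adj (e.symm 1) (e.symm 4))).toNat + 256 * (decide (D.Adj (e.symm 2) (e.symm 4))).toNat + 512 * (decide (D.Adj (e.symm 3) (e.symm 4))).toNat) < 1024 := by omega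
  have hlo11 : (1 * (decide (D.Adj (e.symm 0) (e.symm 1))).toNat + 2 * (decide (D.Adj (e.symm 0) (e.symm 2))).toNat + 4 * (decide (D.Adj (e.symm 1) (e.symm 2))).toNat + 8 * (decide (D.Adj (e.symm 0) (e.symm 3))).toNat + 16 * (decide (D.Adj (e.symm 1) (e.symm 3))).toNat + 32 * (decide (D.Adj (e.symm 2) (e.symm 3))).toNat + 64 * (decide (D.Adj (e.symm 0) (e.symm 4))).toNat + 128 * (decide (D.Adj (e.symm 1) (e.symm 4))).toNat + 256 * (decide (D.Adj (e.symm 2) (e.symm 4))).toNat + 512 * (decide (D.Adj (e.symm 3) (e.symm 4))).toNat + 1024 * (decide (D.Adj (e.symm 0) (e.symm 5))).toNat) < 2048 := by omega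
  have hlo12 : (1 * (decide (D.Adj (e.symm 0) (e.symm 1))).toNat + 2 * (decide (D.Adj (e.symm 0) (e.symm 2))).toNat + 4 * (decide (D.Adj (e.symm 1) (e.symm 2))).toNat + 8 * (decide (D.Adj (e.symm 0) (e.symm 3))).toNat + 16 * (decide (D.Adj (e.symm 1) (e.symm 3))).toNat + 32 * (decide (D.Adj (e.symm 2) (e.symm 3))).toNat + 64 * (decide (D.Adj (e.symm 0) (e.symm 4))).toNat + 128 * (decide (D.Adj (e.symm 1) (e.symm 4))).toNat + 256 * (decide (D.Adj (e.symm 2) (e.symm 4))).toNat + 512 * (decide (D.Adj (e.symm 3) (e.symm 4))).toNat + 1024 * (decide (D.Adj (e.symm 0) (e.symm 5))).toNat + 2048 * (decide (D.Adj (e.symm 1) (e.symm 5))).toNat) < 4096 := by omega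
  have hlo13 : (1 * (decide (D.Adj (e.symm 0) (e.symm 1))).toNat + 2 * (decide (D.Adj (e.symm 0) (e.symm 2))).toNat + 4 * (decide (D.Adj (e.symm 1) (e.symm 2))).toNat + 8 * (decide (D.Adj (e.symm 0) (e.symm 3))).toNat + 16 * (decide (D.Adj (e.symm 1) (e.symm 3))).toNat + 32 * (decide (D.Adj (e.symm 2) (e.symm 3))).toNat + 64 * (decide (D.Adj (e.symm 0) (e.symm 4))).toNat + 128 * (decide (D.Adj (e.symm 1) (e.symm 4))).toNat + 256 * (decide (D.Adj (e.symm 2) (e.symm 4))).toNat + 512 * (decide (D.Adj (e.symm 3) (e.symm 4))).toNat + 1024 * (decide (D.Adj (e.symm 0) (e.symm 5))).toNat + 2048 * (decide (D.Adj (e.symm 1) (e.symm 5))).toNat + 4096 * (decide (D.Adj (e.symm 2) (e.symm 5))).toNat) < 8192 := by omega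
  have hlo14 : (1 * (decide (D.Adj (e.symm 0) (e.symm 1))).toNat + 2 * (decide (D.Adj (e.symm 0) (e.symm 2))).toNat + 4 * (decide (D.Adj (e.symm 1) (e.symm 2))).toNat + 8 * (decide (D.Adj (e.symm 0) (e.symm 3))).toNat + 16 * (decide (D.Adj (e.symm 1) (e.symm 3))).toNat + 32 * (decide (D.Adj (e.symm 2) (e.symm 3))).toNat + 64 * (decide (D.Adj (e.symm 0) (e.symm 4))).toNat + 128 * (decide (D.Adj (e.symm 1) (e.symm 4))).toNat + 256 * (decide (D.Adj (e.symm 2) (e.symm 4))).toNat + 512 * (decide (D.Adj (e.symm 3) (e.symm 4))).toNat + 1024 * (decide (D.Adj (e.symm 0) (e.symm 5))).toNat + 2048 * (decide (D.Adj (e.symm 1) (e.symm 5))).toNat + 4096 * (decide (D.Adj (e.symm 2) (e.symm 5))).toNat + 8192 * (decide (D.Adj (e.symm 3) (e.symm 5))).toNat) < 16384 := by omega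
  have hb0 : n / 1 % 2 = (decide (D.Adj (e.symm 0) (e.symm 1))).toNat := bitext 1 (0) _ (1 * (decide (D.Adj (e.symm 0) (e.symm 2))).toNat + 2 * (decide (D.Adj (e.symm 1) (e.symm 2))).toNat + 4 * (decide (D.Adj (e.symm 0) (e.symm 3))).toNat + 8 * (decide (D.Adj (e.symm 1) (e.symm 3))).toNat + 16 * (decide (D.Adj (e.symm 2) (e.symm 3))).toNat + 32 * (decide (D.Adj (e.symm 0) (e.symm 4))).toNat + 64 * (decide (D.Adj (e.symm 1) (e.symm 4))).toNat + 128 * (decide (D.Adj (e.symm 2) (e.symm 4))).toNat + 256 * (decide (D.Adj (e.symm 3) (e.symm 4))).toNat + 512 * (decide (D.Adj (e.symm 0) (e.symm 5))).toNat + 1024 * (decide (D.Adj (e.symm 1) (e.symm 5))).toNat + 2048 * (decide (D.Adj (e.symm 2) (e.symm 5))).toNat + 4096 * (decide (D.Adj (e.symm 3) (e.symm 5))).toNat + 8192 * (decide (D.Adj (e.symm 4) (e.symm 5))).toNat) n (by norm_num) hlo0 hle0 (by rw [hn]; ring)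
  have hb1 : n / 2 % 2 = (decide (D.Adj (e.symm 0) (e.symm 2))).toNat := bitext 2 (1 * (decide (D.Adj (e.symm 0) (e.symm 1))).toNat) _ (1 * (decide (D.Adj (e.symm 1) (e.symm 2))).toNat + 2 * (decide (D.Adj (e.symm 0) (e.symm 3))).toNat + 4 * (decide (D.Adj (e.symm 1) (e.symm 3))).toNat + 8 * (decide (D.Adj (e.symm 2) (e.symm 3))).toNat + 16 * (decide (D.Adj (e.symm 0) (e.symm 4))).toNat + 32 * (decide (D.Adj (e.symm 1) (e.symm 4))).toNat + 64 * (decide (D.Adj (e.symm 2) (e.symm 4))).toNat + 128 * (decide (D.Adj (e.symm 3) (e.symm 4))).toNat + 256 * (decide (D.Adj (e.symm 0) (e.symm 5))).toNat + 512 * (decide (D.Adj (e.symm 1) (e.symm 5))).toNat + 1024 * (decide (D.Adj (e.symm 2) (e.symm 5))).toNat + 2048 * (decide (D.Adj (e.symm 3) (e.symm 5))).toNat + 4096 * (decide (D.Adj (e.symm 4) (e.symm 5))).toNat) n (by norm_num) hlo1 hle1 (by rw [hn]; ring)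
  have hb2 : n / 4 % 2 = (decide (D.Adj (e.symm 1) (e.symm 2))).toNat := bitext 4 (1 * (decide (D.Adj (e.symm 0) (e.symm 1))).toNat + 2 * (decide (D.Adj (e.symm 0) (e.symm 2))).toNat) _ (1 * (decide (D.Adj (e.symm 0) (e.symm 3))).toNat + 2 * (decide (D.Adj (e.symm 1) (e.symm 3))).toNat + 4 * (decide (D.Adj (e.symm 2) (e.symm 3))).toNat + 8 * (decide (D.Adj (e.symm 0) (e.symm 4))).toNat + 16 * (decide (D.Adj (e.symm 1) (e.symm 4))).toNat + 32 * (decide (D.Adj (e.symm 2) (e.symm 4))).toNat + 64 * (decide (D.Adj (e.symm 3) (e.symm 4))).toNat + 128 * (decide (D.Adj (e.symm 0) (e.symm 5))).toNat + 256 * (decide (D.Adj (e.symm 1) (e.symm 5))).toNat + 512 * (decide (D.Adj (e.symm 2) (e.symm 5))).toNat + 1024 * (decide (D.Adj (e.symm 3) (e.symm 5))).toNat + 2048 * (decide (D.Adj (e.symm 4) (e.symm 5))).toNat) n (by norm_num) hlo2 hle2 (by rw [hn]; ring)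
  have hb3 : n / 8 % 2 = (decide (D.Adj (e.symm 0) (e.symm 3))).toNat := bitext 8 (1 * (decide (D.Adj (e.symm 0) (e.symm 1))).toNat + 2 * (decide (D.Adj (e.symm 0) (e.symm 2))).toNat + 4 * (decide (D.Adj (e.symm 1) (e.symm 2))).toNat) _ (1 * (decide (D.Adj (e.symm 1) (e.symm 3))).toNat + 2 * (decide (D.Adj (e.symm 2) (e.symm 3))).toNat + 4 * (decide (D.Adj (e.symm 0) (e.symm 4))).toNat + 8 * (decide (D.Adj (e.symm 1) (e.symm 4))).toNat + 16 * (decide (D.Adj (e.symm 2) (e.symm 4))).toNat + 32 * (decide (D.Adj (e.symm 3) (e.symm 4))).toNat + 64 * (decide (D.Adj (e.symm 0) (e.symm 5))).toNat + 128 * (decide (D.Adj (e.symm 1) (e.symm 5))).toNat + 256 * (decide (D.Adj (e.symm 2) (e.symm 5))).toNat + 512 * (decide (D.Adj (e.symm 3) (e.symm 5))).toNat + 1024 * (decide (D.Adj (e.symm 4) (e.symm 5))).toNat) n (by norm_num) hlo3 hle3 (by rw [hn]; ring)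
  have hb4 : n / 16 % 2 = (decide (D.Adj (e.symm 1) (e.symm 3))).toNat := bitext 16 (1 * (decide (D.Adj (e.symm 0) (e.symm 1))).toNat + 2 * (decide (D.Adj (e.symm 0) (e.symm 2))).toNat + 4 * (decide (D.Adj (e.symm 1) (e.symm 2))).toNat + 8 * (decide (D.Adj (e.symm 0) (e.symm 3))).toNat) _ (1 * (decide (D.Adj (e.symm 2) (e.symm 3))).toNat + 2 * (decide (D.Adj (e.symm 0) (e.symm 4))).toNat + 4 * (decide (D.Adj (e.symm 1) (e.symm 4))).toNat + 8 * (decide (D.Adj (e.symm 2) (e.symm 4))).toNat + 16 * (decide (D.Adj (e.symm 3) (e.symm 4))).toNat + 32 * (decide (D.Adj (e.symm 0) (e.symm 5))).toNat + 64 * (decide (D.Adj (e.symm 1) (e.symm 5))).toNat + 128 * (decide (D.Adj (e.symm 2) (e.symm 5))).toNat + 256 * (decide (D.Adj (e.symm 3) (e.symm 5))).toNat + 512 * (decide (D.Adj (e.symm 4) (e.symm 5))).toNat) n (by norm_num) hlo4 hle4 (by rw [hn]; ring)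
  have hb5 : n / 32 % 2 = (decide (D.Adj (e.symm 2) (e.symm 3))).toNat := bitext 32 (1 * (decide (D.Adj (e.symm 0) (e.symm 1))).toNat + 2 * (decide (D.Adj (e.symm 0) (e.symm 2))).toNat + 4 * (decide (D.Adj (e.symm 1) (e.symm 2))).toNat + 8 * (decide (D.Adj (e.symm 0) (e.symm 3))).toNat + 16 * (decide (D.Adj (e.symm 1) (e.symm 3))).toNat) _ (1 * (decide (D.Adj (e.symm 0) (e.symm 4))).toNat + 2 * (decide (D.Adj (e.symm 1) (e.symm 4))).toNat + 4 * (decide (D.Adj (e.symm 2) (e.symm 4))).toNat + 8 * (decide (D.Adj (e.symm 3) (e.symm 4))).toNat + 16 * (decide (D.Adj (e.symm 0) (e.symm 5))).toNat + 32 * (decide (D.Adj (e.symm 1) (e.symm 5))).toNat + 64 * (decide (D.Adj (e.symm 2) (e.symm 5))).toNat + 128 * (decide (D.Adj (e.symm 3) (e.symm 5))).toNat + 256 * (decide (D.Adj (e.symm 4) (e.symm 5))).toNat) n (by norm_num) hlo5 hle5 (by rw [hn]; ring)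
  have hb6 : n / 64 % 2 = (decide (D.Adj (e.symm 0) (e.symm 4))).toNat := bitext 64 (1 * (decide (D.Adj (e.symm 0) (e.symm 1))).toNat + 2 * (decide (D.Adj (e.symm 0) (e.symm 2))).toNat + 4 * (decide (D.Adj (e.symm 1) (e.symm 2))).toNat + 8 * (decide (D.Adj (e.symm 0) (e.symm 3))).toNat + 16 * (decide (D.Adj (e.symm 1) (e.symm 3))).toNat + 32 * (decide (D.Adj (e.symm 2) (e.symm 3))).toNat) _ (1 * (decide (D.Adj (e.symm 1) (e.symm 4))).toNat + 2 * (decide (D.Adj (e.symm 2) (e.symm 4))).toNat + 4 * (decide (D.Adj (e.symm 3) (e.symm 4))).toNat + 8 * (decide (D.Adj (e.symm 0) (e.symm 5))).toNat + 16 * (decide (D.Adj (e.symm 1) (e.symm 5))).toNat + 32 * (decide (D.Adj (e.symm 2) (e.symm 5))).toNat + 64 * (decide (D.Adj (e.symm 3) (e.symm 5))).toNat + 128 * (decide (D.Adj (e.symm 4) (e.symm 5))).toNat) n (by norm_num) hlo6 hle6 (by rw [hn]; ring)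
  have hb7 : n / 128 % 2 = (decide (D.Adj (e.symm 1) (e.symm 4))).toNat := bitext 128 (1 * (decide (D.Adj (e.symm 0) (e.symm 1))).toNat + 2 * (decide (D.Adj (e.symm 0) (e.symm 2))).toNat + 4 * (decide (D.Adj (e.symm 1) (e.symm 2))).toNat + 8 * (decide (D.Adj (e.symm 0) (e.symm 3))).toNat + 16 * (decide (D.Adj (e.symm 1) (e.symm 3))).toNat + 32 * (decide (D.Adj (e.symm 2) (e.symm 3))).toNat + 64 * (decide (D.Adj (e.symm 0) (e.symm 4))).toNat) _ (1 * (decide (D.Adj (e.symm 2) (e.symm 4))).toNat + 2 * (decide (D.Adj (e.symm 3) (e.symm 4))).toNat + 4 * (decide (D.Adj (e.symm 0) (e.symm 5))).toNat + 8 * (decide (D.Adj (e.symm 1) (e.symm 5))).toNat + 16 * (decide (D.Adj (e.symm 2) (e.symm 5))).toNat + 32 * (decide (D.Adj (e.symm 3) (e.symm 5))).toNat + 64 * (decide (D.Adj (e.symm 4) (e.symm 5))).toNat) n (by norm_num) hlo7 hle7 (by rw [hn]; ring)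
  have hb8 : n / 256 % 2 = (decide (D.Adj (e.symm 2) (e.symm 4))).toNat := bitext 256 (1 * (decide (D.Adj (e.symm 0) (e.symm 1))).toNat + 2 * (decide (D.Adj (e.symm 0) (e.symm 2))).toNat + 4 * (decide (D.Adj (e.symm 1) (e.symm 2))).toNat + 8 * (decide (D.Adj (e.symm 0) (e.symm 3))).toNat + 16 * (decide (D.Adj (e.symm 1) (e.symm 3))).toNat + 32 * (decide (D.Adj (e.symm 2) (e.symm 3))).toNat + 64 * (decide (D.Adj (e.symm 0) (e.symm 4))).toNat + 128 * (decide (D.Adj (e.symm 1) (e.symm 4))).toNat) _ (1 * (decide (D.Adj (e.symm 3) (e.symm 4))).toNat + 2 * (decide (D.Adj (e.symm 0) (e.symm 5))).toNat + 4 * (decide (D.Adj (e.symm 1) (e.symm 5))).toNat + 8 * (decide (D.Adj (e.symm 2) (e.symm 5))).toNat + 16 * (decide (D.Adj (e.symm 3) (e.symm 5))).toNat + 32 * (decide (D.Adj (e.symm 4) (e.symm 5))).toNat) n (by norm_num) hlo8 hle8 (by rw [hn]; ring)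
  have hb9 : n / 512 % 2 = (decide (D.Adj (e.symm 3) (e.symm 4))).toNat := bitext 512 (1 * (decide (D.Adj (e.symm 0) (e.symm 1))).toNat + 2 * (decide (D.Adj (e.symm 0) (e.symm 2))).toNat + 4 * (decide (D.Adj (e.symm 1) (e.symm 2))).toNat + 8 * (decide (D.Adj (e.symm 0) (e.symm 3))).toNat + 16 * (decide (D.Adj (e.symm 1) (e.symm 3))).toNat + 32 * (decide (D.Adj (e.symm 2) (e.symm 3))).toNat + 64 * (decide (D.Adj (e.symm 0) (e.symm 4))).toNat + 128 * (decide (D.Adj (e.symm 1) (e.symm 4))).toNat + 256 * (decide (D.Adj (e.symm 2) (e.symm 4))).toNat) _ (1 * (decide (D.Adj (e.symm 0) (e.symm 5))).toNat + 2 * (decide (D.Adj (e.symm 1) (e.symm 5))).toNat + 4 * (decide (D.Adj (e.symm 2) (e.symm 5))).toNat + 8 * (decide (D.Adj (e.symm 3) (e.symm 5))).toNat + 16 * (decide (D.Adj (e.symm 4) (e.symm 5))).toNat) n (by norm_num) hlo9 hle9 (by rw [hn]; ring)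
  have hb10 : n / 1024 % 2 = (decide (D.Adj (e.symm 0) (e.symm 5))).toNat := bitext 1024 (1 * (decide (D.Adj (e.symm 0) (e.symm 1))).toNat + 2 * (decide (D.Adj (e.symm 0) (e.symm 2))).toNat + 4 * (decide (D.Adj (e.symm 1) (e.symm 2))).toNat + 8 * (decide (D.Adj (e.symm 0) (e.symm 3))).toNat + 16 * (decide (D.Adj (e.symm 1) (e.symm 3))).toNat + 32 * (decide (D.Adj (e.symm 2) (e.symm 3))).toNat + 64 * (decide (D.Adj (e.symm 0) (e.symm 4))).toNat + 128 * (decide (D.Adj (e.symm 1) (e.symm 4))).toNat + 256 * (decide (D.Adj (e.symm 2) (e.symm 4))).toNat + 512 * (decide (D.Adj (e.symm 3) (e.symm 4))).toNat) _ (1 * (decide (D.Adj (e.symm 1) (e.symm 5))).toNat + 2 * (decide (D.Adj (e.symm 2) (e.symm 5))).toNat + 4 * (decide (D.Adj (e.symm 3) (e.symm 5))).toNat + 8 * (decide (D.Adj (e.symm 4) (e.symm 5))).toNat) n (by norm_num) hlo10 hle10 (by rw [hn]; ring)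
  have hb11 : n / 2048 % 2 = (decide (D.Adj (e.symm 1) (e.symm 5))).toNat := bitext 2048 (1 * (decide (D.Adj (e.symm 0) (e.symm 1))).toNat + 2 * (decide (D.Adj (e.symm 0) (e.symm 2))).toNat + 4 * (decide (D.Adj (e.symm 1) (e.symm 2))).toNat + 8 * (decide (D.Adj (e.symm 0) (e.symm 3))).toNat + 16 * (decide (D.Adj (e.symm 1) (e.symm 3))).toNat + 32 * (decide (D.Adj (e.symm 2) (e.symm 3))).toNat + 64 * (decide (D.Adj (e.symm 0) (e.symm 4))).toNat + 128 * (decide (D.Adj (e.symm 1) (e.symm 4))).toNat + 256 * (decide (D.Adj (e.symm 2) (e.symm 4))).toNat + 512 * (decide (D.Adj (e.symm 3) (e.symm 4))).toNat + 1024 * (decide (D.Adj (e.symm 0) (e.symm 5))).toNat) _ (1 * (decide (D.Adj (e.symm 2) (e.symm 5))).toNat + 2 * (decide (D.Adj (e.symm 3) (e.symm 5))).toNat + 4 * (decide (D.Adj (e.symm 4) (e.symm 5))).toNat) n (by norm_num) hlo11 hle11 (by rw [hn]; ring)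
  have hb12 : n / 4096 % 2 = (decide (D.Adj (e.symm 2) (e.symm 5))).toNat := bitext 4096 (1 * (decide (D.Adj (e.symm 0) (e.symm 1))).toNat + 2 * (decide (D.Adj (e.symm 0) (e.symm 2))).toNat + 4 * (decide (D.Adj (e.symm 1) (e.symm 2))).toNat + 8 * (decide (D.Adj (e.symm 0) (e.symm 3))).toNat + 16 * (decide (D.Adj (e.symm 1) (e.symm 3))).toNat + 32 * (decide (D.Adj (e.symm 2) (e.symm 3))).toNat + 64 * (decide (D.Adj (e.symm 0) (e.symm 4))).toNat + 128 * (decide (D.Adj (e.symm 1) (e.symm 4))).toNat + 256 * (decide (D.Adj (e.symm 2) (e.symm 4))).toNat + 512 * (decide (D.Adj (e.symm 3) (e.symm 4))).toNat + 1024 * (decide (D.Adj (e.symm 0) (e.symm 5))).toNat + 2048 * (decide (D.Adj (e.symm 1) (e.symm 5))).toNat) _ (1 * (decide (D.Adj (e.symm 3) (e.symm 5))).toNat + 2 * (decide (D.Adj (e.symm 4) (e.symm 5))).toNat) n (by norm_num) hlo12 hle12 (by rw [hn]; ring)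
  have hb13 : n / 8192 % 2 = (decide (D.Adj (e.symm 3) (e.symm 5))).toNat := bitext 8192 (1 * (decide (D.Adj (e.symm 0) (e.symm 1))).toNat + 2 * (decide (D.Adj (e.symm 0) (e.symm 2))).toNat + 4 * (decide (D.Adj (e.symm 1) (e.symm 2))).toNat + 8 * (decide (D.Adj (e.symm 0) (e.symm 3))).toNat + 16 * (decide (D.Adj (e.symm 1) (e.symm 3))).toNat + 32 * (decide (D.Adj (e.symm 2) (e.symm 3))).toNat + 64 * (decide (D.Adj (e.symm 0) (e.symm 4))).toNat + 128 * (decide (D.Adj (e.symm 1) (e.symm 4))).toNat + 256 * (decide (D.Adj (e.symm 2) (e.symm 4))).toNat + 512 * (decide (D.Adj (e.symm 3) (e.symm 4))).toNat + 1024 * (decide (D.Adj (e.symm 0) (e.symm 5))).toNat + 2048 * (decide (D.Adj (e.symm 1) (e.symm 5))).toNat + 4096 * (decide (D.Adj (e.symm 2) (e.symm 5))).toNat) _ (1 * (decide (D.Adj (e.symm 4) (e.symm 5))).toNat) n (by norm_num) hlo13 hle13 (by rw [hn]; ring)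
  have hb14 : n / 16384 % 2 = (decide (D.Adj (e.symm 4) (e.symm 5))).toNat := bitext 16384 (1 * (decide (D.Adj (e.symm 0) (e.symm 1))).toNat + 2 * (decide (D.Adj (e.symm 0) (e.symm 2))).toNat + 4 * (decide (D.Adj (e.symm 1) (e.symm 2))).toNat + 8 * (decide (D.Adj (e.symm 0) (e.symm 3))).toNat + 16 * (decide (D.Adj (e.symm 1) (e.symm 3))).toNat + 32 * (decide (D.Adj (e.symm 2) (e.symm 3))).toNat + 64 * (decide (D.Adj (e.symm 0) (e.symm 4))).toNat + 128 * (decide (D.Adj (e.symm 1) (e.symm 4))).toNat + 256 * (decide (D.Adj (e.symm 2) (e.symm 4))).toNat + 512 * (decide (D.Adj (e.symm 3) (e.symm 4))).toNat + 1024 * (decide (D.Adj (e.symm 0) (e.symm 5))).toNat + 2048 * (decide (D.Adj (e.symm 1) (e.symm 5))).toNat + 4096 * (decide (D.Adj (e.symm 2) (e.symm 5))).toNat + 8192 * (decide (D.Adj (e.symm 3) (e.symm 5))).toNat) _ (0) n (by norm_num) hlo14 hle14 (by rw [hn]; ring)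
  have hne : ∀ i j : Fin 6, i ≠ j → e.symm i ≠ e.symm j := fun i j h => e.symm.injective.ne h
  simp only [check6, Bool.or_eq_true, Bool.and_eq_true] at hkey
  rcases hkey with (((((((((⟨ht1, ht2⟩ | ⟨ht1, ht2⟩) | ⟨ht1, ht2⟩) | ⟨ht1, ht2⟩) | ⟨ht1, ht2⟩) | ⟨ht1, ht2⟩) | ⟨ht1, ht2⟩) | ⟨ht1, ht2⟩) | ⟨ht1, ht2⟩) | ⟨ht1, ht2⟩)
  · exact assemble e 0 1 2 3 4 5 (by decide) (by decide) (by decide) (by decide) D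
      (transOfTrip D hD _ _ _ (hne 0 1 (by decide)) (hne 1 2 (by decide)) (hne 0 2 (by decide)) (trip_prop hb0 hb2 hb1 ht1).1 (trip_prop hb0 hb2 hb1 ht1).2)
      (transOfTrip D hD _ _ _ (hne 3 4 (by decide)) (hne 4 5 (by decide)) (hne 3 5 (by decide)) (trip_prop hb9 hb14 hb13 ht2).1 (trip_prop hb9 hb14 hb13 ht2).2)
  · exact assemble e 0 1 3 2 4 5 (by decide) (by decide) (by decide) (by decide) D
      (transOfTrip D hD _ _ _ (hne 0 1 (by decide)) (hne 1 3 (by decide)) (hne 0 3 (by decide)) (trip_prop hb0 hb4 hb3 ht1).1 (trip_prop hb0 hb4 hb3 ht1).2)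
      (transOfTrip D hD _ _ _ (hne 2 4 (by decide)) (hne 4 5 (by decide)) (hne 2 5 (by decide)) (trip_prop hb8 hb14 hb12 ht2).1 (trip_prop hb8 hb14 hb12 ht2).2)
  · exact assemble e 0 1 4 2 3 5 (by decide) (by decide) (by decide) (by decide) D
      (transOfTrip D hD _ _ _ (hne 0 1 (by decide)) (hne 1 4 (by decide)) (hne 0 4 (by decide)) (trip_prop hb0 hb7 hb6 ht1).1 (trip_prop hb0 hb7 hb6 ht1).2)
      (transOfTrip D hD _ _ _ (hne 2 3 (by decide)) (hne 3 5 (by decide)) (hne 2 5 (by decide)) (trip_prop hb5 hb13 hb12 ht2).1 (trip_prop hb5 hb13 hb12 ht2).2)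
  · exact assemble e 0 1 5 2 3 4 (by decide) (by decide) (by decide) (by decide) D
      (transOfTrip D hD _ _ _ (hne 0 1 (by decide)) (hne 1 5 (by decide)) (hne 0 5 (by decide)) (trip_prop hb0 hb11 hb10 ht1).1 (trip_prop hb0 hb11 hb10 ht1).2)
      (transOfTrip D hD _ _ _ (hne 2 3 (by decide)) (hne 3 4 (by decide)) (hne 2 4 (by decide)) (trip_prop hb5 hb9 hb8 ht2).1 (trip_prop hb5 hb9 hb8 ht2).2)
  · exact assemble e 0 2 3 1 4 5 (by decide) (by decide) (by decide) (by decide) D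
      (transOfTrip D hD _ _ _ (hne 0 2 (by decide)) (hne 2 3 (by decide)) (hne 0 3 (by decide)) (trip_prop hb1 hb5 hb3 ht1).1 (trip_prop hb1 hb5 hb3 ht1).2)
      (transOfTrip D hD _ _ _ (hne 1 4 (by decide)) (hne 4 5 (by decide)) (hne 1 5 (by decide)) (trip_prop hb7 hb14 hb11 ht2).1 (trip_prop hb7 hb14 hb11 ht2).2)
  · exact assemble e 0 2 4 1 3 5 (by decide) (by decide) (by decide) (by decide) D
      (transOfTrip D hD _ _ _ (hne 0 2 (by decide)) (hne 2 4 (by decide)) (hne 0 4 (by decide)) (trip_prop hb1 hb8 hb6 ht1).1 (trip_prop hb1 hb8 hb6 ht1).2)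
      (transOfTrip D hD _ _ _ (hne 1 3 (by decide)) (hne 3 5 (by decide)) (hne 1 5 (by decide)) (trip_prop hb4 hb13 hb11 ht2).1 (trip_prop hb4 hb13 hb11 ht2).2)
  · exact assemble e 0 2 5 1 3 4 (by decide) (by decide) (by decide) (by decide) D
      (transOfTrip D hD _ _ _ (hne 0 2 (by decide)) (hne 2 5 (by decide)) (hne 0 5 (by decide)) (trip_prop hb1 hb12 hb10 ht1).1 (trip_prop hb1 hb12 hb10 ht1).2)
      (transOfTrip D hD _ _ _ (hne 1 3 (by decide)) (hne 3 4 (by decide)) (hne 1 4 (by decide)) (trip_prop hb4 hb9 hb7 ht2).1 (trip_prop hb4 hb9 hb7 ht2).2)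
  · exact assemble e 0 3 4 1 2 5 (by decide) (by decide) (by decide) (by decide) D
      (transOfTrip D hD _ _ _ (hne 0 3 (by decide)) (hne 3 4 (by decide)) (hne 0 4 (by decide)) (trip_prop hb3 hb9 hb6 ht1).1 (trip_prop hb3 hb9 hb6 ht1).2)
      (transOfTrip D hD _ _ _ (hne 1 2 (by decide)) (hne 2 5 (by decide)) (hne 1 5 (by decide)) (trip_prop hb2 hb12 hb11 ht2).1 (trip_prop hb2 hb12 hb11 ht2).2)
  · exact assemble e 0 3 5 1 2 4 (by decide) (by decide) (by decide) (by decide) D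
      (transOfTrip D hD _ _ _ (hne 0 3 (by decide)) (hne 3 5 (by decide)) (hne 0 5 (by decide)) (trip_prop hb3 hb13 hb10 ht1).1 (trip_prop hb3 hb13 hb10 ht1).2)
      (transOfTrip D hD _ _ _ (hne 1 2 (by decide)) (hne 2 4 (by decide)) (hne 1 4 (by decide)) (trip_prop hb2 hb8 hb7 ht2).1 (trip_prop hb2 hb8 hb7 ht2).2)
  · exact assemble e 0 4 5 1 2 3 (by decide) (by decide) (by decide) (by decide) D
      (transOfTrip D hD _ _ _ (hne 0 4 (by decide)) (hne 4 5 (by decide)) (hne 0 5 (by decide)) (trip_prop hb6 hb14 hb10 ht1).1 (trip_prop hb6 hb14 hb10 ht1).2)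
      (transOfTrip D hD _ _ _ (hne 1 2 (by decide)) (hne 2 3 (by decide)) (hne 1 3 (by decide)) (trip_prop hb2 hb5 hb4 ht2).1 (trip_prop hb2 hb5 hb4 ht2).2)
end

section
/- Let r ≥ 2 and let T_r be the transitive tournament on r vertices. If D is a T_r-free digraph on n vertices, then both the sum over v ∈ V(D) of d⁺_D(v)² and the sum over v ∈ V(D) of d⁻_D(v)² are at most ((r−2)/(r−1))²·n³. -/
private lemma key_ineq (ρ n s : ℝ) (h3 : 3 ≤ ρ) (hs : 0 ≤ s) (hsn : s ≤ n) :
    ((ρ-3)/(ρ-2))^2*s^3 + 2*((ρ-3)/(ρ-2))*(n-s)*s^2 + s*(n-s)^2 + (n-s)*s^2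
      ≤ ((ρ-2)/(ρ-1))^2 * n^3 := by
  have h1 : (ρ-1) ≠ 0 := by intro h; nlinarith
  have h2 : (ρ-2) ≠ 0 := by intro h; nlinarith
  have key : ((ρ-2)/(ρ-1))^2 * n^3 -
      (((ρ-3)/(ρ-2))^2*s^3 + 2*((ρ-3)/(ρ-2))*(n-s)*s^2 + s*(n-s)^2 + (n-s)*s^2)
      = (s - (ρ-2)/(ρ-1)*n)^2 * (n + ((ρ-3)/(ρ-2))*(2-((ρ-3)/(ρ-2)))*s) := by
    field_simp
    ring
  have hc : 0 ≤ (ρ-3)/(ρ-2) := div_nonneg (by linarith) (by linarith)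
  have hc1 : (ρ-3)/(ρ-2) ≤ 1 := by
    rw [div_le_one (by linarith)]; linarith
  have hpos : 0 ≤ (s - (ρ-2)/(ρ-1)*n)^2 * (n + ((ρ-3)/(ρ-2))*(2-((ρ-3)/(ρ-2)))*s) := by
    apply mul_nonneg (sq_nonneg _)
    have : 0 ≤ ((ρ-3)/(ρ-2))*(2-((ρ-3)/(ρ-2)))*s :=
      mul_nonneg (mul_nonneg hc (by linarith)) hs
    linarith
  linarith

private lemma outdeg_bound (r : ℕ) (hr : 2 ≤ r) : ∀ (V : Type) [Fintype V] (D : Digr V),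
    ¬ D.Contains (transTournament r) →
    (∑ v : V, ({u : V | D.Adj v u}.ncard : ℝ) ^ 2)
      ≤ (((r : ℝ) - 2) / ((r : ℝ) - 1)) ^ 2 * (Fintype.card V : ℝ) ^ 3 := by
  induction r, hr using Nat.le_induction with
  | base =>
    intro V _ D h
    have hzero : ∀ v : V, {u : V | D.Adj v u} = ∅ := by
      intro v
      ext u
      simp only [Set.mem_setOf_eq, Set.mem_empty_iff_false, iff_false]
      intro hadj
      have hvu : v ≠ u := fun he => D.irrefl v (by rw [he] at hadj ⊢; exact hadj)
      apply h
      refine ⟨fun i => if i = 0 then v else u, ?_, ?_⟩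
      · intro a b hab
        fin_cases a <;> fin_cases b <;> simp_all
      · intro a b hlt
        have hlt' : a < b := hlt
        have ha : a = 0 := by omega
        have hb : b = 1 := by omega
        subst ha; subst hb
        simpa using hadj
    simp only [hzero, Set.ncard_empty, Nat.cast_zero]
    norm_num
  | succ r hr IH =>
    intro V _ D h
    classical
    set n := Fintype.card V with hn
    rcases isEmpty_or_nonempty V with hV | hV
    · have : n = 0 := by simp [hn]
      simp [Finset.univ_eq_empty, this]
    obtain ⟨v₀, -, hmax⟩ := Finset.exists_max_image Finset.univ
      (fun v => {u : V | D.Adj v u}.ncard) ⟨Classical.arbitrary V, Finset.mem_univ _⟩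
    set N : Set V := {u | D.Adj v₀ u} with hN
    set s := N.ncard with hs
    have hsn : s ≤ n := by
      have h1 : s ≤ (Set.univ : Set V).ncard :=
        Set.ncard_le_ncard (Set.subset_univ N) Set.finite_univ
      simpa [Set.ncard_univ, Nat.card_eq_fintype_card, hn] using h1
    haveI : Fintype ↥N := Fintype.ofFinite ↥N
    have card_N : Fintype.card ↥N = s := by
      rw [← Nat.card_eq_fintype_card]; exact Nat.card_coe_set_eq N
    -- inner digraph
    set D' : Digr ↥N := ⟨fun a b => D.Adj a.val b.val, fun a ha => D.irrefl a.val ha⟩ with hD'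
    have h' : ¬ D'.Contains (transTournament r) := by
      rintro ⟨f, finj, fadj⟩
      apply h
      refine ⟨Fin.cases v₀ (fun i => (f i).val), ?_, ?_⟩
      · intro a b
        induction a using Fin.cases with
        | zero =>
          induction b using Fin.cases with
          | zero => intro _; rfl
          | succ j =>
            intro hab
            simp only [Fin.cases_zero, Fin.cases_succ] at hab
            exact absurd ((f j).2) (by rw [← hab]; exact D.irrefl v₀)
        | succ i =>
          induction b using Fin.cases with
          | zero =>
            intro hab
            simp only [Fin.cases_zero, Fin.cases_succ] at hab
            exact absurd ((f i).2) (by rw [hab]; exact D.irrefl v₀)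
          | succ j =>
            intro hab
            simp only [Fin.cases_succ] at hab
            rw [finj (Subtype.val_injective hab)]
      · intro a b hab
        have hab' : a < b := hab
        induction b using Fin.cases with
        | zero => exact absurd hab' (Fin.not_lt_zero a)
        | succ j =>
          induction a using Fin.cases with
          | zero =>
            simp only [Fin.cases_zero, Fin.cases_succ]
            exact (f j).2
          | succ i =>
            simp only [Fin.cases_succ]
            have hij : i < j := by
              simpa [Fin.succ_lt_succ_iff] using hab'
            exact fadj i j hij
    have hin := IH ↥N D' h'
    rw [card_N] at hin
    set c : ℝ := ((r : ℝ) - 2) / ((r : ℝ) - 1) with hc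
    have hcompl : s + Nᶜ.ncard = n := by
      rw [hs, Set.ncard_add_ncard_compl, Nat.card_eq_fintype_card]
    -- (a) degree comparison
    have ha : ∀ u : ↥N, {w : V | D.Adj u.val w}.ncard ≤ {w : ↥N | D'.Adj u w}.ncard + Nᶜ.ncard := by
      intro u
      have hsub : {w : V | D.Adj u.val w} ⊆ (Subtype.val '' {w : ↥N | D'.Adj u w}) ∪ Nᶜ := by
        intro w hw
        by_cases hwN : w ∈ N
        · exact Or.inl ⟨⟨w, hwN⟩, hw, rfl⟩
        · exact Or.inr hwN
      calc {w : V | D.Adj u.val w}.ncard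
          ≤ ((Subtype.val '' {w : ↥N | D'.Adj u w}) ∪ Nᶜ).ncard :=
            Set.ncard_le_ncard hsub (Set.toFinite _)
        _ ≤ (Subtype.val '' {w : ↥N | D'.Adj u w}).ncard + Nᶜ.ncard := Set.ncard_union_le _ _
        _ = {w : ↥N | D'.Adj u w}.ncard + Nᶜ.ncard := by
            rw [Set.ncard_image_of_injective _ Subtype.val_injective]
    have hscast : (s : ℝ) + (Nᶜ.ncard : ℝ) = (n : ℝ) := by exact_mod_cast hcompl
    have haR : ∀ u : ↥N, ({w : V | D.Adj u.val w}.ncard : ℝ)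
        ≤ ({w : ↥N | D'.Adj u w}.ncard : ℝ) + ((n : ℝ) - s) := by
      intro u
      have h1 : (({w : V | D.Adj u.val w}.ncard : ℕ) : ℝ)
          ≤ (({w : ↥N | D'.Adj u w}.ncard + Nᶜ.ncard : ℕ) : ℝ) := Nat.cast_le.mpr (ha u)
      push_cast at h1
      linarith
    -- (b) Cauchy-Schwarz
    set S1 : ℝ := ∑ u : ↥N, ({w : ↥N | D'.Adj u w}.ncard : ℝ) with hS1
    set S2 : ℝ := ∑ u : ↥N, ({w : ↥N | D'.Adj u w}.ncard : ℝ) ^ 2 with hS2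
    have hS1nonneg : 0 ≤ S1 := Finset.sum_nonneg fun u _ => Nat.cast_nonneg _
    have hS2nonneg : 0 ≤ S2 := Finset.sum_nonneg fun u _ => sq_nonneg _
    have hCS : S1 ^ 2 ≤ (s : ℝ) * S2 := by
      have hcs := Finset.sum_mul_sq_le_sq_mul_sq Finset.univ (fun _ : ↥N => (1 : ℝ))
        (fun u => ({w : ↥N | D'.Adj u w}.ncard : ℝ))
      simpa [Finset.card_univ, card_N, hS1, hS2] using hcs
    have hrR : (2 : ℝ) ≤ (r : ℝ) := by exact_mod_cast hr
    have hc_nonneg : 0 ≤ c := div_nonneg (by linarith) (by linarith)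
    have hS1le : S1 ≤ c * (s : ℝ) ^ 2 := by
      nlinarith [hCS, hin, hS1nonneg, Nat.cast_nonneg (α := ℝ) s,
        mul_nonneg hc_nonneg (sq_nonneg (s : ℝ)), sq_nonneg (S1 - c * (s : ℝ) ^ 2),
        sq_nonneg (S1 + c * (s : ℝ) ^ 2)]
    -- (c) splitting the sum
    have hsplit : ∑ v : V, ({u : V | D.Adj v u}.ncard : ℝ) ^ 2
        = (∑ u : ↥N, ({w : V | D.Adj u.val w}.ncard : ℝ) ^ 2)
          + ∑ v ∈ N.toFinsetᶜ, ({u : V | D.Adj v u}.ncard : ℝ) ^ 2 := by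
      rw [← Finset.sum_add_sum_compl N.toFinset (fun v => ({u : V | D.Adj v u}.ncard : ℝ) ^ 2)]
      congr 1
      exact Finset.sum_subtype N.toFinset (fun x => Set.mem_toFinset)
        (fun v => ({u : V | D.Adj v u}.ncard : ℝ) ^ 2)
    have hNcard : N.toFinset.card = s := (Set.ncard_eq_toFinset_card' N).symm
    have houtside : ∑ v ∈ N.toFinsetᶜ, ({u : V | D.Adj v u}.ncard : ℝ) ^ 2
        ≤ ((n : ℝ) - s) * (s : ℝ) ^ 2 := by
      have hcard : (N.toFinsetᶜ.card : ℝ) = (n : ℝ) - s := by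
        rw [Finset.card_compl, hNcard, ← hn, Nat.cast_sub hsn]
      calc ∑ v ∈ N.toFinsetᶜ, ({u : V | D.Adj v u}.ncard : ℝ) ^ 2
          ≤ ∑ _v ∈ N.toFinsetᶜ, (s : ℝ) ^ 2 := by
            refine Finset.sum_le_sum fun v _ => ?_
            have h1 : ({u : V | D.Adj v u}.ncard : ℝ) ≤ (s : ℝ) :=
              Nat.cast_le.mpr (hmax v (Finset.mem_univ v))
            exact pow_le_pow_left₀ (Nat.cast_nonneg _) h1 2
        _ = (N.toFinsetᶜ.card : ℝ) * (s : ℝ) ^ 2 := by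
            rw [Finset.sum_const, nsmul_eq_mul]
        _ = ((n : ℝ) - s) * (s : ℝ) ^ 2 := by rw [hcard]
    have hinside : ∑ u : ↥N, ({w : V | D.Adj u.val w}.ncard : ℝ) ^ 2
        ≤ S2 + 2 * ((n : ℝ) - s) * S1 + (s : ℝ) * ((n : ℝ) - s) ^ 2 := by
      calc ∑ u : ↥N, ({w : V | D.Adj u.val w}.ncard : ℝ) ^ 2
          ≤ ∑ u : ↥N, (({w : ↥N | D'.Adj u w}.ncard : ℝ) + ((n : ℝ) - s)) ^ 2 := by
            refine Finset.sum_le_sum fun u _ => ?_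
            exact pow_le_pow_left₀ (Nat.cast_nonneg _) (haR u) 2
        _ = ∑ u : ↥N, (({w : ↥N | D'.Adj u w}.ncard : ℝ) ^ 2
              + 2 * ((n : ℝ) - s) * ({w : ↥N | D'.Adj u w}.ncard : ℝ) + ((n : ℝ) - s) ^ 2) :=
            Finset.sum_congr rfl fun u _ => by ring
        _ = S2 + 2 * ((n : ℝ) - s) * S1 + (s : ℝ) * ((n : ℝ) - s) ^ 2 := by
            rw [Finset.sum_add_distrib, Finset.sum_add_distrib, ← Finset.mul_sum,
              Finset.sum_const, Finset.card_univ, card_N, nsmul_eq_mul, hS1, hS2]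
    -- final inequality
    have hsnR : (s : ℝ) ≤ (n : ℝ) := Nat.cast_le.mpr hsn
    have hs0 : (0 : ℝ) ≤ (s : ℝ) := Nat.cast_nonneg _
    have hkey := key_ineq ((r : ℝ) + 1) (n : ℝ) (s : ℝ) (by linarith) hs0 hsnR
    have e1 : ((r : ℝ) + 1 - 3) / ((r : ℝ) + 1 - 2) = c := by rw [hc]; ring_nf
    have e2 : ((r : ℝ) + 1 - 2) / ((r : ℝ) + 1 - 1) = ((r : ℝ) + 1 - 2) / ((r : ℝ) + 1 - 1) := rfl
    rw [e1] at hkey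
    have hgoalC : (((↑(r + 1) : ℝ) - 2) / ((↑(r + 1) : ℝ) - 1)) ^ 2
        = (((r : ℝ) + 1 - 2) / ((r : ℝ) + 1 - 1)) ^ 2 := by push_cast; ring_nf
    rw [hsplit, hgoalC]
    have hKnonneg : (0:ℝ) ≤ (n : ℝ) - s := by linarith
    have hstep : 2 * ((n : ℝ) - s) * S1 ≤ 2 * ((n : ℝ) - s) * (c * (s : ℝ) ^ 2) := by
      apply mul_le_mul_of_nonneg_left hS1le
      linarith
    linarith [hin, hstep, hinside, houtside, hkey]

/-- if `D` is a `T_r`-free digraph on `n` vertices (`r ≥ 2`), then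
both the sum of squared out-degrees and the sum of squared in-degrees are at most
`((r−2)/(r−1))² n³`. -/
theorem stmt13 (r : ℕ) (hr : 2 ≤ r) (V : Type) [Fintype V] (D : Digr V)
    (h : ¬ D.Contains (transTournament r)) :
    (∑ v : V, ({u : V | D.Adj v u}.ncard : ℝ) ^ 2)
        ≤ (((r : ℝ) - 2) / ((r : ℝ) - 1)) ^ 2 * (Fintype.card V : ℝ) ^ 3 ∧
    (∑ v : V, ({u : V | D.Adj u v}.ncard : ℝ) ^ 2)
        ≤ (((r : ℝ) - 2) / ((r : ℝ) - 1)) ^ 2 * (Fintype.card V : ℝ) ^ 3 := by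
  constructor
  · exact outdeg_bound r hr V D h
  · set Drev : Digr V := ⟨fun a b => D.Adj b a, fun v hv => D.irrefl v hv⟩ with hDrev
    have hrev : ¬ Drev.Contains (transTournament r) := by
      rintro ⟨f, finj, fadj⟩
      refine h ⟨fun i => f i.rev, finj.comp Fin.rev_injective, fun a b hab => ?_⟩
      have hab' : b.rev < a.rev := Fin.rev_lt_rev.mpr hab
      exact fadj b.rev a.rev hab'
    exact outdeg_bound r hr V Drev hrev
end

section
/- Let r ≥ 3 and let D_r and D'_r be (not necessarily distinct) r-good digraphs in F_r, and let Q_{D_r⊍D'_r} = Q^L_{D_r} ⊍ Q^R_{D'_r}. Then every palette P with d(P) > (r−2)/(r−1) has Q_{D_r⊍D'_r} as a subpalette. -/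
open Finset

section Aux

lemma turan_count (n k : ℕ) (hk : 0 < k) :
    ((n:ℝ))^2 ≤ (k:ℝ) * (((univ.filter fun p : Fin n × Fin n => (p.1:ℕ) % k = (p.2:ℕ) % k).card : ℝ)) := by
  classical
  set A : ℕ → Finset (Fin n) := fun c => univ.filter (fun i : Fin n => (i:ℕ) % k = c) with hA
  have hdisj : ∀ c ∈ range k, ∀ d ∈ range k, c ≠ d → Disjoint ((A c) ×ˢ (A c)) ((A d) ×ˢ (A d)) := by
    intro c _ d _ hcd
    simp only [Finset.disjoint_left]
    rintro ⟨i, j⟩ hi hj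
    simp only [hA, mem_product, mem_filter] at hi hj
    exact hcd (hi.1.2 ▸ hj.1.2 ▸ rfl)
  have hcover : (univ.filter fun p : Fin n × Fin n => (p.1:ℕ) % k = (p.2:ℕ) % k)
      = (range k).biUnion (fun c => (A c) ×ˢ (A c)) := by
    ext ⟨i, j⟩
    simp only [mem_filter, mem_univ, true_and, mem_biUnion, mem_range, mem_product, hA]
    constructor
    · intro h; exact ⟨(i:ℕ) % k, Nat.mod_lt _ hk, by simp, by simp [h.symm]⟩
    · rintro ⟨c, -, h1, h2⟩; omega
  have hsum : ∑ c ∈ range k, (A c).card = n := by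
    have : (univ : Finset (Fin n)) = (range k).biUnion A := by
      ext i; simp only [mem_univ, mem_biUnion, mem_range, hA, mem_filter, true_iff]
      exact ⟨(i:ℕ) % k, Nat.mod_lt _ hk, by simp⟩
    rw [← Finset.card_biUnion, ← this, card_univ, Fintype.card_fin]
    intro c _ d _ hcd
    simp only [Finset.disjoint_left, hA, mem_filter]
    rintro i ⟨-, h1⟩ ⟨-, h2⟩; omega
  have hcard : (univ.filter fun p : Fin n × Fin n => (p.1:ℕ) % k = (p.2:ℕ) % k).card
      = ∑ c ∈ range k, ((A c).card)^2 := by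
    rw [hcover, Finset.card_biUnion hdisj]
    simp [Finset.card_product, sq]
  rw [hcard]
  have := sq_sum_le_card_mul_sum_sq (s := range k) (f := fun c => ((A c).card : ℝ))
  push_cast [← hsum]
  simpa [card_range] using this

lemma turan_edge_bound (n r : ℕ) (hr : 3 ≤ r) (G : SimpleGraph (Fin n)) [DecidableRel G.Adj]
    (h : G.CliqueFree r) : (2 * G.edgeFinset.card : ℝ) ≤ ((r:ℝ) - 2) / ((r:ℝ) - 1) * (n:ℝ)^2 := by
  classical
  set k := r - 1 with hk
  have hkpos : 0 < k := by omega
  have hle : G.edgeFinset.card ≤ (SimpleGraph.turanGraph n k).edgeFinset.card :=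
    (SimpleGraph.isTuranMaximal_turanGraph (n := n) (r := k) hkpos).2
      (by rwa [show k + 1 = r by omega])
  have htwo := SimpleGraph.two_mul_card_edgeFinset (G := SimpleGraph.turanGraph n k)
  set Ec := (univ.filter fun p : Fin n × Fin n => (p.1:ℕ) % k = (p.2:ℕ) % k).card with hEc
  have hfilt : (univ.filter fun (x : Fin n × Fin n) => (SimpleGraph.turanGraph n k).Adj x.1 x.2)
        = univ \ (univ.filter fun p : Fin n × Fin n => (p.1:ℕ) % k = (p.2:ℕ) % k) := by
    ext ⟨i, j⟩
    simp only [mem_filter, mem_univ, true_and, mem_sdiff, SimpleGraph.turanGraph_adj]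
  have hsub : Ec ≤ n^2 := by
    calc Ec ≤ (univ : Finset (Fin n × Fin n)).card := card_filter_le _ _
    _ = n^2 := by simp [sq]
  have htwo2 : 2 * (SimpleGraph.turanGraph n k).edgeFinset.card = n^2 - Ec := by
    rw [htwo]
    have : (univ.filter fun (x : Fin n × Fin n) => (SimpleGraph.turanGraph n k).Adj x.1 x.2).card
        = n^2 - Ec := by
      rw [hfilt, card_sdiff_of_subset (filter_subset _ _), card_univ]
      simp [sq, hEc]
    exact this
  have h1 : (2 * G.edgeFinset.card : ℝ) ≤ (n:ℝ)^2 - (Ec : ℝ) := by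
    have hn : (2 * G.edgeFinset.card : ℕ) ≤ n^2 - Ec := by omega
    have := (Nat.cast_le (α := ℝ)).2 hn
    push_cast [hsub] at this
    linarith
  have hEq := turan_count n k hkpos
  rw [← hEc] at hEq
  have hkR : (1:ℝ) ≤ (k:ℝ) := by exact_mod_cast hkpos
  have hkr : (k:ℝ) = (r:ℝ) - 1 := by
    have : ((k:ℕ):ℝ) = ((r - 1 : ℕ) : ℝ) := by rw [hk]
    rw [this, Nat.cast_sub (by omega)]; simp
  rw [hkr] at hEq
  have hr1 : (0:ℝ) < (r:ℝ) - 1 := by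
    have : (3:ℝ) ≤ (r:ℝ) := by exact_mod_cast hr
    linarith
  rw [div_mul_eq_mul_div, le_div_iff₀ hr1]
  nlinarith [hEq, h1]

end Aux

section Aux2

lemma exK_twice_bound (n r : ℕ) (hr : 3 ≤ r) :
    (2 * exK n r : ℝ) ≤ ((r:ℝ) - 2) / ((r:ℝ) - 1) * (n:ℝ)^2 := by
  classical
  set S := {m | ∃ G : SimpleGraph (Fin n), G.CliqueFree r ∧ G.edgeSet.ncard = m} with hS
  have hne : S.Nonempty := by
    refine ⟨0, ⊥, SimpleGraph.cliqueFree_bot (by omega), ?_⟩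
    simp
  have hbd : BddAbove S := by
    refine ⟨Fintype.card (Sym2 (Fin n)), ?_⟩
    rintro m ⟨G, -, rfl⟩
    have : G.edgeSet.ncard ≤ (Set.univ : Set (Sym2 (Fin n))).ncard :=
      Set.ncard_le_ncard (Set.subset_univ _) Set.finite_univ
    simpa [Set.ncard_univ] using this
  have hmem : exK n r ∈ S := Nat.sSup_mem hne hbd
  obtain ⟨G, hGfree, hGcard⟩ := hmem
  have hcard : G.edgeSet.ncard = G.edgeFinset.card := by
    rw [Set.ncard_eq_toFinset_card', SimpleGraph.edgeFinset]
  rw [← hGcard, hcard]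
  exact turan_edge_bound n r hr G hGfree

lemma contains_of_exDigr_lt {W : Type} [Fintype W] (n : ℕ) (D : Digr W) (G : Digr (Fin n))
    (h : exDigr n D < G.arcCount) : G.Contains D := by
  by_contra hc
  have hmem : G.arcCount ∈ {m | ∃ G' : Digr (Fin n), ¬ G'.Contains D ∧ G'.arcCount = m} :=
    ⟨G, hc, rfl⟩
  have hbd : BddAbove {m | ∃ G' : Digr (Fin n), ¬ G'.Contains D ∧ G'.arcCount = m} := by
    refine ⟨Fintype.card (Fin n × Fin n), ?_⟩
    rintro m ⟨G', -, rfl⟩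
    have : {p : Fin n × Fin n | G'.Adj p.1 p.2}.ncard ≤ (Set.univ : Set (Fin n × Fin n)).ncard :=
      Set.ncard_le_ncard (Set.subset_univ _) Set.finite_univ
    simpa [Digr.arcCount, Set.ncard_univ] using this
  have := le_csSup hbd hmem
  rw [exDigr] at h
  omega

/-- Key lemma: a relation on `C` with more than `(r-2)/(r-1)|C|²` pairs admits a
homomorphism from any `r`-good digraph. -/
lemma hom_of_dense {C : Type} [Fintype C] [Nonempty C] (r : ℕ) (hr : 3 ≤ r) {V : Type} [Fintype V]
    (D : Digr V) (hD : IsGood r D) (L : C → C → Prop)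
    (hL : ((r:ℝ) - 2) / ((r:ℝ) - 1) * (Fintype.card C : ℝ)^2 < ({p : C × C | L p.1 p.2}.ncard : ℝ)) :
    ∃ f : V → C, ∀ a b, D.Adj a b → L (f a) (f b) := by
  classical
  set m := Fintype.card C with hm
  have hm1 : 0 < m := Fintype.card_pos
  set q : ℝ := ((r:ℝ) - 2) / ((r:ℝ) - 1) with hq
  set pc : ℕ := {p : C × C | L p.1 p.2}.ncard with hpc
  have hδ : 0 < (pc:ℝ) - q * (m:ℝ)^2 := by linarith
  obtain ⟨t, ht⟩ := exists_nat_gt ((m:ℝ) / ((pc:ℝ) - q * (m:ℝ)^2))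
  have htm : (m:ℝ) < (t:ℝ) * ((pc:ℝ) - q * (m:ℝ)^2) := by
    rw [div_lt_iff₀ hδ] at ht; linarith
  have ht1 : 0 < t := by
    by_contra h0
    have : t = 0 := by omega
    rw [this] at htm
    simp at htm
    have : (0:ℝ) < (m:ℝ) := by exact_mod_cast hm1
    linarith
  set n := m * t with hn
  set e : Fin n ≃ C × Fin t :=
    finProdFinEquiv.symm.trans ((Fintype.equivFin C).symm.prodCongr (Equiv.refl (Fin t))) with he
  set G : Digr (Fin n) := ⟨fun i j => i ≠ j ∧ L (e i).1 (e j).1, fun i h => h.1 rfl⟩ with hG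
  -- count the set S of pairs with the L-property
  set S : Set (Fin n × Fin n) := {p | L (e p.1).1 (e p.2).1} with hSdef
  have hScard : S.ncard = pc * (t * t) := by
    have e0 : ↥S ≃ {x : (C × C) × (Fin t × Fin t) // L x.1.1 x.1.2} :=
      Equiv.subtypeEquiv ((e.prodCongr e).trans (Equiv.prodProdProdComm C (Fin t) C (Fin t)))
        (fun p => Iff.rfl)
    have e2 : {x : (C × C) × (Fin t × Fin t) // L x.1.1 x.1.2} ≃
        {p : C × C // L p.1 p.2} × (Fin t × Fin t) :=
      { toFun := fun x => (⟨x.1.1, x.2⟩, x.1.2)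
        invFun := fun x => ⟨(x.1.1, x.2), x.1.2⟩
        left_inv := fun x => rfl
        right_inv := fun x => rfl }
    have e1 : ↥S ≃ {p : C × C // L p.1 p.2} × (Fin t × Fin t) := e0.trans e2
    rw [← Nat.card_coe_set_eq, Nat.card_congr e1, Nat.card_prod, Nat.card_prod]
    simp [hpc, ← Nat.card_coe_set_eq, Nat.card_eq_fintype_card, Fintype.card_subtype]
  -- the diagonal
  have hdiag : ({p : Fin n × Fin n | p.1 = p.2} : Set _).ncard ≤ n := by
    have himg : ({p : Fin n × Fin n | p.1 = p.2} : Set _) = (fun i => (i, i)) '' Set.univ := by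
      ext ⟨i, j⟩; simp [eq_comm]
    rw [himg]
    calc ((fun i => (i, i)) '' Set.univ).ncard ≤ (Set.univ : Set (Fin n)).ncard :=
      Set.ncard_image_le Set.finite_univ
    _ = n := by simp [Set.ncard_univ]
  have harc : S.ncard ≤ G.arcCount + n := by
    have hsub : S ⊆ {p : Fin n × Fin n | G.Adj p.1 p.2} ∪ {p | p.1 = p.2} := by
      intro p hp
      by_cases hpe : p.1 = p.2
      · exact Or.inr hpe
      · exact Or.inl ⟨hpe, hp⟩
    calc S.ncard ≤ ({p : Fin n × Fin n | G.Adj p.1 p.2} ∪ {p | p.1 = p.2}).ncard :=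
      Set.ncard_le_ncard hsub (Set.Finite.union (Set.toFinite _) (Set.toFinite _))
    _ ≤ {p : Fin n × Fin n | G.Adj p.1 p.2}.ncard + ({p : Fin n × Fin n | p.1 = p.2}).ncard :=
      Set.ncard_union_le _ _
    _ ≤ G.arcCount + n := by
      rw [Digr.arcCount]; omega
  -- arcCount > 2 exK n r
  have hexK : (2 * exK n r : ℝ) ≤ q * (n:ℝ)^2 := exK_twice_bound n r hr
  have harcR : q * (n:ℝ)^2 < (G.arcCount : ℝ) := by
    have h1 : (pc:ℝ) * ((t:ℝ) * (t:ℝ)) - (n:ℝ) ≤ (G.arcCount : ℝ) := by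
      have := harc
      rw [hScard] at this
      have := (Nat.cast_le (α := ℝ)).2 this
      push_cast at this
      linarith
    have hnR : (n:ℝ) = (m:ℝ) * (t:ℝ) := by rw [hn]; push_cast; ring
    have htpos : (0:ℝ) < (t:ℝ) := by exact_mod_cast ht1
    have hpos' : (0:ℝ) < (t:ℝ) * ((pc:ℝ) - q * (m:ℝ)^2) - (m:ℝ) := by linarith
    have key : (0:ℝ) < (t:ℝ) * ((t:ℝ) * ((pc:ℝ) - q * (m:ℝ)^2) - (m:ℝ)) := mul_pos htpos hpos'
    have h1' : (pc:ℝ) * ((t:ℝ) * (t:ℝ)) - (m:ℝ) * (t:ℝ) ≤ (G.arcCount : ℝ) := by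
      rw [hnR] at h1; linarith
    have hn2 : q * (n:ℝ)^2 = q * ((m:ℝ) * (t:ℝ))^2 := by rw [hnR]
    rw [hn2]
    nlinarith [key, h1']
  have hlt : exDigr n D < G.arcCount := by
    rw [hD.2 n]
    by_contra hle
    push_neg at hle
    have := (Nat.cast_le (α := ℝ)).2 hle
    push_cast at this
    linarith
  obtain ⟨g, -, hg⟩ := contains_of_exDigr_lt n D G hlt
  exact ⟨fun v => (e (g v)).1, fun a b hab => (hg a b hab).2⟩

end Aux2

/-- for `r ≥ 3` and `D, D' ∈ 𝓕_r`, every palette `P` with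
`d(P) > (r−2)/(r−1)` has `Q^L_D ⊍ Q^R_{D'}` as a subpalette. -/
theorem stmt18 (r : ℕ) (hr : 3 ≤ r) (V₁ V₂ : Type) [Fintype V₁] [Fintype V₂]
    (D : Digr V₁) (D' : Digr V₂) (hD : IsGood r D) (hD' : IsGood r D')
    (C : Type) [Fintype C] [Nonempty C] (P : Palette C)
    (hP : ((r : ℝ) - 2) / ((r : ℝ) - 1) < P.density) :
    Subpalette ((leftPalette D).union (rightPalette D')) P := by
  classical
  set m := Fintype.card C with hm
  have hm1 : 0 < m := Fintype.card_pos
  have hmR : (0:ℝ) < (m:ℝ) := by exact_mod_cast hm1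
  set q : ℝ := ((r:ℝ) - 2) / ((r:ℝ) - 1) with hq
  have hA : q * (m:ℝ)^3 < (P.A.ncard : ℝ) := by
    rw [Palette.density, ← hm] at hP
    have h3 : (0:ℝ) < (m:ℝ)^3 := by positivity
    have := mul_lt_mul_of_pos_right hP h3
    rwa [div_mul_cancel₀ _ (ne_of_gt h3)] at this
  -- the left and right pair relations
  set LL : C → C → Prop := fun x y => ∃ z, (x, y, z) ∈ P.A with hLL
  set RR : C → C → Prop := fun y z => ∃ x, (x, y, z) ∈ P.A with hRR
  -- counting: |A| ≤ |L-pairs| * m and |A| ≤ |R-pairs| * m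
  have hcount : ∀ (Q : C → C → Prop) (ψ : C × C × C → (C × C) × C),
      (∀ a ∈ P.A, Q (ψ a).1.1 (ψ a).1.2) → Function.Injective ψ →
      P.A.ncard ≤ {p : C × C | Q p.1 p.2}.ncard * m := by
    intro Q ψ hmem hinj
    have φinj : Function.Injective
        (fun a : ↥P.A => ((⟨(ψ a.1).1, hmem a.1 a.2⟩ : ↥{p : C × C | Q p.1 p.2}), (ψ a.1).2)) := by
      intro a b hab
      simp only [Prod.mk.injEq, Subtype.mk.injEq] at hab
      apply Subtype.ext
      apply hinj
      exact Prod.ext hab.1 hab.2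
    have hcard := Nat.card_le_card_of_injective _ φinj
    rw [Nat.card_prod, Nat.card_coe_set_eq, Nat.card_coe_set_eq] at hcard
    simpa [hm, Nat.card_eq_fintype_card] using hcard
  have hALnat : P.A.ncard ≤ {p : C × C | LL p.1 p.2}.ncard * m := by
    refine hcount LL (fun a => ((a.1, a.2.1), a.2.2)) (fun a ha => ⟨a.2.2, ha⟩) ?_
    intro a b hab
    simp only [Prod.mk.injEq] at hab
    obtain ⟨⟨h1, h2⟩, h3⟩ := hab
    exact Prod.ext h1 (Prod.ext h2 h3)
  have hARnat : P.A.ncard ≤ {p : C × C | RR p.1 p.2}.ncard * m := by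
    refine hcount RR (fun a => ((a.2.1, a.2.2), a.1)) (fun a ha => ⟨a.1, ha⟩) ?_
    intro a b hab
    simp only [Prod.mk.injEq] at hab
    obtain ⟨⟨h1, h2⟩, h3⟩ := hab
    exact Prod.ext h3 (Prod.ext h1 h2)
  have hdense : ∀ (Q : C → C → Prop), P.A.ncard ≤ {p : C × C | Q p.1 p.2}.ncard * m →
      q * (Fintype.card C : ℝ)^2 < ({p : C × C | Q p.1 p.2}.ncard : ℝ) := by
    intro Q hQ
    rw [← hm]
    have hcast : (P.A.ncard : ℝ) ≤ ({p : C × C | Q p.1 p.2}.ncard : ℝ) * (m:ℝ) := by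
      exact_mod_cast hQ
    have h1 : q * (m:ℝ)^3 < ({p : C × C | Q p.1 p.2}.ncard : ℝ) * (m:ℝ) := lt_of_lt_of_le hA hcast
    have h2 : q * (m:ℝ)^3 = (q * (m:ℝ)^2) * (m:ℝ) := by ring
    rw [h2] at h1
    exact lt_of_mul_lt_mul_right h1 (le_of_lt hmR)
  obtain ⟨fL, hfL⟩ := hom_of_dense r hr D hD LL (hdense LL hALnat)
  obtain ⟨fR, hfR⟩ := hom_of_dense r hr D' hD' RR (hdense RR hARnat)
  set zfun : V₁ → V₁ → C := fun a b =>
    if h : D.Adj a b then (hfL a b h).choose else Classical.arbitrary C with hzfun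
  set xfun : V₂ → V₂ → C := fun a b =>
    if h : D'.Adj a b then (hfR a b h).choose else Classical.arbitrary C with hxfun
  have hz : ∀ a b, D.Adj a b → (fL a, fL b, zfun a b) ∈ P.A := by
    intro a b h
    have hzz : zfun a b = (hfL a b h).choose := by rw [hzfun]; simp [dif_pos h]
    rw [hzz]
    exact (hfL a b h).choose_spec
  have hx : ∀ a b, D'.Adj a b → (xfun a b, fR a, fR b) ∈ P.A := by
    intro a b h
    have hxx : xfun a b = (hfR a b h).choose := by rw [hxfun]; simp [dif_pos h]
    rw [hxx]
    exact (hfR a b h).choose_spec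
  refine ⟨Sum.elim (Sum.elim fL fun p => zfun p.1 p.2) (Sum.elim fR fun p => xfun p.1 p.2), ?_⟩
  rintro ⟨u, v, w⟩ ht
  rcases ht with ⟨x, y, z, hxyz, heq⟩ | ⟨x, y, z, hxyz, heq⟩
  · obtain ⟨a, b, hab, habe⟩ := hxyz
    rw [Prod.mk.injEq, Prod.mk.injEq] at habe heq
    obtain ⟨h1, h2, h3⟩ := habe
    obtain ⟨g1, g2, g3⟩ := heq
    subst h1 h2 h3 g1 g2 g3
    simpa using hz a b hab
  · obtain ⟨a, b, hab, habe⟩ := hxyz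
    rw [Prod.mk.injEq, Prod.mk.injEq] at habe heq
    obtain ⟨h1, h2, h3⟩ := habe
    obtain ⟨g1, g2, g3⟩ := heq
    subst h1 h2 h3 g1 g2 g3
    simpa using hx a b hab
end
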